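/- Embedding Theorem: Let Γ be a sequent of L0. If Γ is derivable in the finitary system M by a proof in which every sequent Δ occurring in the proof satisfies lev(Δ) ≤ k, then Γ is derivable in the system M^Ω_k. -/
import Mathlib


namespace OneVarMu

/-- Operator forms of the language `L_Ω` (one fixed variable `X`, written `var`).
`nut` is the auxiliary fixed-point connective `ν̃`; `L0` operator forms are the
`nut`-free ones. -/
inductive Form : Type
  | atom  : ℕ → Form          -- p_i
  | natom : ℕ → Form          -- p̄_i
  | var   : Form              -- X
  | and   : Form → Form → Form
  | or    : Form → Form → Form
  | box   : Form → Form
  | dia   : Form → Form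
  | mu    : Form → Form       -- μX.A
  | nu    : Form → Form       -- νX.A
  | nut   : Form → Form       -- ν̃X.A
  deriving DecidableEq

namespace Form

/-- Negation `¬A` (on `ν̃` we extend the `L0` definition as for `ν`). -/
def compl : Form → Form
  | atom i  => natom i
  | natom i => atom i
  | var     => var
  | and A B => or (compl A) (compl B)
  | or A B  => and (compl A) (compl B)
  | box A   => dia (compl A)
  | dia A   => box (compl A)
  | mu A    => nu (compl A)
  | nu A    => mu (compl A)
  | nut A   => mu (compl A)

/-- `subst A B` is `A(B)`: substitute `B` for every free occurrence of `X` in `A`. -/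
def subst : Form → Form → Form
  | atom i, _  => atom i
  | natom i, _ => natom i
  | var, B     => B
  | and A1 A2, B => and (subst A1 B) (subst A2 B)
  | or A1 A2, B  => or (subst A1 B) (subst A2 B)
  | box A, B   => box (subst A B)
  | dia A, B   => dia (subst A B)
  | mu A, _    => mu A
  | nu A, _    => nu A
  | nut A, _   => nut A

/-- The level of an operator form: maximal nesting of fixed-point operators. -/
def lev : Form → ℕ
  | atom _  => 0
  | natom _ => 0
  | var     => 0
  | and A B => max (lev A) (lev B)
  | or A B  => max (lev A) (lev B)
  | box A   => lev A
  | dia A   => lev A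
  | mu A    => lev A + 1
  | nu A    => lev A + 1
  | nut A   => lev A + 1

/-- `A'`: replace every occurrence of `νX` by `ν̃X`. -/
def prime : Form → Form
  | atom i  => atom i
  | natom i => natom i
  | var     => var
  | and A B => and (prime A) (prime B)
  | or A B  => or (prime A) (prime B)
  | box A   => box (prime A)
  | dia A   => dia (prime A)
  | mu A    => mu (prime A)
  | nu A    => nut (prime A)
  | nut A   => nut (prime A)

/-- `A` is an operator form of `L0`, i.e. contains no `ν̃`. -/
def IsL0 : Form → Prop
  | and A B => IsL0 A ∧ IsL0 B
  | or A B  => IsL0 A ∧ IsL0 B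
  | box A   => IsL0 A
  | dia A   => IsL0 A
  | mu A    => IsL0 A
  | nu A    => IsL0 A
  | nut _   => False
  | _       => True

/-- `A` has no free occurrence of the variable `X`, i.e. `A` is a formula. -/
def ClosedF : Form → Prop
  | var     => False
  | and A B => ClosedF A ∧ ClosedF B
  | or A B  => ClosedF A ∧ ClosedF B
  | box A   => ClosedF A
  | dia A   => ClosedF A
  | _       => True

/-- `⊤ := p ∨ p̄` for a fixed atomic proposition. -/
def top : Form := or (atom 0) (natom 0)

/-- Finite iterations `A^i(⊤)`. -/
def iter (A : Form) : ℕ → Form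
  | 0     => top
  | n + 1 => subst A (iter A n)

/-- `OccursIn A B`: the operator form `A` occurs (as a subterm) in `B`. -/
def OccursIn (A : Form) : Form → Prop
  | atom i  => A = atom i
  | natom i => A = natom i
  | var     => A = var
  | and C D => A = and C D ∨ OccursIn A C ∨ OccursIn A D
  | or C D  => A = or C D ∨ OccursIn A C ∨ OccursIn A D
  | box C   => A = box C ∨ OccursIn A C
  | dia C   => A = dia C ∨ OccursIn A C
  | mu C    => A = mu C ∨ OccursIn A C
  | nu C    => A = nu C ∨ OccursIn A C
  | nut C   => A = nut C ∨ OccursIn A C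

/-- `replace t r A`: simultaneously replace every occurrence of `t` in `A` by `r`. -/
def replace (t r : Form) : Form → Form
  | and A B => if and A B = t then r else and (replace t r A) (replace t r B)
  | or A B  => if or A B = t then r else or (replace t r A) (replace t r B)
  | box A   => if box A = t then r else box (replace t r A)
  | dia A   => if dia A = t then r else dia (replace t r A)
  | mu A    => if mu A = t then r else mu (replace t r A)
  | nu A    => if nu A = t then r else nu (replace t r A)
  | nut A   => if nut A = t then r else nut (replace t r A)
  | A       => if A = t then r else A

end Form

/-- Sequents are finite sets of formulae. -/
abbrev Sequent := Finset Form

/-- Every member is a formula (no free `X`): a sequent of `L_Ω`. -/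
def ClosedSeq (Γ : Sequent) : Prop := ∀ C ∈ Γ, C.ClosedF

/-- A sequent of `L0`: every member is a `ν̃`-free formula. -/
def L0Seq (Γ : Sequent) : Prop := ∀ C ∈ Γ, C.IsL0 ∧ C.ClosedF

/-- `Γ` is `h`-positive: every `ν̃X.A` occurring in it has level `< h`. -/
def Positive (h : ℕ) (Γ : Sequent) : Prop :=
  ∀ C ∈ Γ, ∀ B : Form, Form.OccursIn (Form.nut B) C → Form.lev (Form.nut B) < h

/-- Every formula of the sequent has level `≤ k`. -/
def SeqLevLE (k : ℕ) (Γ : Sequent) : Prop := ∀ C ∈ Γ, C.lev ≤ k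

/-- The infinitary cut-free system `K_ω`. -/
inductive KDer : Sequent → Prop
  | ax (Γ : Sequent) (i : ℕ) :
      KDer (insert (Form.atom i) (insert (Form.natom i) Γ))
  | orR (Γ : Sequent) (A B : Form) :
      KDer (insert A (insert B Γ)) → KDer (insert (Form.or A B) Γ)
  | andR (Γ : Sequent) (A B : Form) :
      KDer (insert A Γ) → KDer (insert B Γ) → KDer (insert (Form.and A B) Γ)
  | boxR (Γ S : Sequent) (A : Form) :
      KDer (insert A Γ) → KDer (Γ.image Form.dia ∪ insert (Form.box A) S)
  | clo (Γ : Sequent) (A : Form) :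
      KDer (insert (Form.subst A (Form.mu A)) Γ) → KDer (insert (Form.mu A) Γ)
  | nuR (Γ : Sequent) (A : Form) :
      (∀ i : ℕ, KDer (insert (Form.iter A i) Γ)) → KDer (insert (Form.nu A) Γ)

/-- The finitary system `M` (with induction rule and cut). -/
inductive MDer : Sequent → Prop
  | ax (Γ : Sequent) (i : ℕ) :
      MDer (insert (Form.atom i) (insert (Form.natom i) Γ))
  | axMu (Γ : Sequent) (A : Form) :
      MDer (insert (Form.mu A) (insert (Form.compl (Form.mu A)) Γ))
  | orR (Γ : Sequent) (A B : Form) :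
      MDer (insert A (insert B Γ)) → MDer (insert (Form.or A B) Γ)
  | andR (Γ : Sequent) (A B : Form) :
      MDer (insert A Γ) → MDer (insert B Γ) → MDer (insert (Form.and A B) Γ)
  | boxR (Γ S : Sequent) (A : Form) :
      MDer (insert A Γ) → MDer (Γ.image Form.dia ∪ insert (Form.box A) S)
  | clo (Γ : Sequent) (A : Form) :
      MDer (insert (Form.subst A (Form.mu A)) Γ) → MDer (insert (Form.mu A) Γ)
  | ind (A B : Form) :
      MDer (insert (Form.compl (Form.subst A B)) {B}) →
      MDer (insert (Form.compl (Form.mu A)) {B})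
  | cut (Γ : Sequent) (A : Form) :
      A.IsL0 → A.ClosedF →
      MDer (insert A Γ) → MDer (insert (Form.compl A) Γ) → MDer Γ

/-- The finitary system `M`, with the extra recording that every sequent occurring
in the proof (i.e. the conclusion of every subderivation) has level `≤ k`. -/
inductive MDerB (k : ℕ) : Sequent → Prop
  | ax (Γ : Sequent) (i : ℕ) :
      SeqLevLE k (insert (Form.atom i) (insert (Form.natom i) Γ)) →
      MDerB k (insert (Form.atom i) (insert (Form.natom i) Γ))
  | axMu (Γ : Sequent) (A : Form) :
      SeqLevLE k (insert (Form.mu A) (insert (Form.compl (Form.mu A)) Γ)) →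
      MDerB k (insert (Form.mu A) (insert (Form.compl (Form.mu A)) Γ))
  | orR (Γ : Sequent) (A B : Form) :
      SeqLevLE k (insert (Form.or A B) Γ) →
      MDerB k (insert A (insert B Γ)) → MDerB k (insert (Form.or A B) Γ)
  | andR (Γ : Sequent) (A B : Form) :
      SeqLevLE k (insert (Form.and A B) Γ) →
      MDerB k (insert A Γ) → MDerB k (insert B Γ) → MDerB k (insert (Form.and A B) Γ)
  | boxR (Γ S : Sequent) (A : Form) :
      SeqLevLE k (Γ.image Form.dia ∪ insert (Form.box A) S) →
      MDerB k (insert A Γ) → MDerB k (Γ.image Form.dia ∪ insert (Form.box A) S)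
  | clo (Γ : Sequent) (A : Form) :
      SeqLevLE k (insert (Form.mu A) Γ) →
      MDerB k (insert (Form.subst A (Form.mu A)) Γ) → MDerB k (insert (Form.mu A) Γ)
  | ind (A B : Form) :
      SeqLevLE k (insert (Form.compl (Form.mu A)) {B}) →
      MDerB k (insert (Form.compl (Form.subst A B)) {B}) →
      MDerB k (insert (Form.compl (Form.mu A)) {B})
  | cut (Γ : Sequent) (A : Form) :
      A.IsL0 → A.ClosedF → SeqLevLE k Γ →
      MDerB k (insert A Γ) → MDerB k (insert (Form.compl A) Γ) → MDerB k Γ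

/-- Derivations of the system `M^Ω_k`, relative to a predicate `prev` expressing
cut-free derivability in `M^Ω_{k-1}`.  The boolean index is `true` if instances
of cut are allowed and `false` for cut-free derivations. -/
inductive OmDerAux (prev : Sequent → Prop) (k : ℕ) : Bool → Sequent → Prop
  | ax (c : Bool) (Γ : Sequent) (i : ℕ) :
      OmDerAux prev k c (insert (Form.atom i) (insert (Form.natom i) Γ))
  | orR (c : Bool) (Γ : Sequent) (A B : Form) :
      OmDerAux prev k c (insert A (insert B Γ)) →
      OmDerAux prev k c (insert (Form.or A B) Γ)
  | andR (c : Bool) (Γ : Sequent) (A B : Form) :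
      OmDerAux prev k c (insert A Γ) → OmDerAux prev k c (insert B Γ) →
      OmDerAux prev k c (insert (Form.and A B) Γ)
  | boxR (c : Bool) (Γ S : Sequent) (A : Form) :
      OmDerAux prev k c (insert A Γ) →
      OmDerAux prev k c (Γ.image Form.dia ∪ insert (Form.box A) S)
  | clo (c : Bool) (Γ : Sequent) (A : Form) :
      OmDerAux prev k c (insert (Form.subst A (Form.mu A)) Γ) →
      OmDerAux prev k c (insert (Form.mu A) Γ)
  | nuR (c : Bool) (Γ : Sequent) (A : Form) :
      (∀ i : ℕ, OmDerAux prev k c (insert (Form.iter A i) Γ)) →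
      OmDerAux prev k c (insert (Form.nu A) Γ)
  | cut (Γ : Sequent) (A : Form) :
      A.IsL0 → A.ClosedF → A.lev ≤ k →
      OmDerAux prev k true (insert (Form.prime A) Γ) →
      OmDerAux prev k true (insert (Form.prime (Form.compl A)) Γ) →
      OmDerAux prev k true Γ
  | omega (c : Bool) (Γ : Sequent) (A : Form) (h : ℕ) :
      1 ≤ h → h ≤ k → A.IsL0 →
      Form.lev (Form.prime (Form.compl (Form.mu A))) = h →
      (∀ Δ : Sequent, ClosedSeq Δ → Positive h Δ →
        prev (insert (Form.prime (Form.mu A)) Δ) → OmDerAux prev k c (Δ ∪ Γ)) →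
      OmDerAux prev k c (insert (Form.prime (Form.compl (Form.mu A))) Γ)
  | omegaT (c : Bool) (Γ : Sequent) (A : Form) (h : ℕ) :
      1 ≤ h → h ≤ k → A.IsL0 →
      Form.lev (Form.prime (Form.compl (Form.mu A))) = h →
      OmDerAux prev k c (insert (Form.prime (Form.mu A)) Γ) →
      (∀ Δ : Sequent, ClosedSeq Δ → Positive h Δ →
        prev (insert (Form.prime (Form.mu A)) Δ) → OmDerAux prev k c (Δ ∪ Γ)) →
      OmDerAux prev k c Γ

/-- `OmProv k c Γ`: the sequent `Γ` is derivable in `M^Ω_k`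
(cut-free when `c = false`). -/
def OmProv : ℕ → Bool → Sequent → Prop
  | 0     => OmDerAux (fun _ => False) 0
  | k + 1 => OmDerAux (fun Δ => OmProv k false Δ) (k + 1)


namespace Form

lemma prime_subst (A B : Form) : prime (subst A B) = subst (prime A) (prime B) := by
  induction A <;> simp [prime, subst, *]

lemma compl_subst (A B : Form) : compl (subst A B) = subst (compl A) (compl B) := by
  induction A <;> simp [compl, subst, *]

lemma lev_compl (A : Form) : lev (compl A) = lev A := by
  induction A <;> simp [compl, lev, *]

lemma lev_prime (A : Form) : lev (prime A) = lev A := by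
  induction A <;> simp [prime, lev, *]

lemma closedF_subst {B : Form} (hB : B.ClosedF) (A : Form) : (subst A B).ClosedF := by
  induction A <;> simp [subst, ClosedF, *]

lemma subst_of_closed {A : Form} (hA : A.ClosedF) (B : Form) : subst A B = A := by
  induction A <;> simp_all [subst, ClosedF]

lemma closedF_prime {A : Form} (hA : A.ClosedF) : (prime A).ClosedF := by
  induction A <;> simp_all [prime, ClosedF]

lemma closedF_compl {A : Form} (hA : A.ClosedF) : (compl A).ClosedF := by
  induction A <;> simp_all [compl, ClosedF]

lemma isL0_compl {A : Form} (hA : A.IsL0) : (compl A).IsL0 := by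
  induction A <;> simp_all [compl, IsL0]

lemma isL0_subst {A B : Form} (hA : A.IsL0) (hB : B.IsL0) : (subst A B).IsL0 := by
  induction A <;> simp_all [subst, IsL0]

lemma compl_compl {A : Form} (hA : A.IsL0) : compl (compl A) = A := by
  induction A <;> simp_all [compl, IsL0]

lemma compl_compl_compl (A : Form) : compl (compl (compl A)) = compl A := by
  induction A <;> simp_all [compl]

lemma isL0_compl_compl (A : Form) : (compl (compl A)).IsL0 := by
  induction A <;> simp_all [compl, IsL0]

lemma closedF_top : top.ClosedF := by simp [top, ClosedF]

lemma isL0_top : top.IsL0 := by simp [top, IsL0]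

lemma prime_top : prime top = top := by simp [top, prime]

lemma closedF_iter (A : Form) (i : ℕ) : (iter A i).ClosedF := by
  induction i with
  | zero => exact closedF_top
  | succ n ih => exact closedF_subst ih A

lemma isL0_iter {A : Form} (hA : A.IsL0) (i : ℕ) : (iter A i).IsL0 := by
  induction i with
  | zero => exact isL0_top
  | succ n ih => exact isL0_subst hA ih

lemma prime_iter (A : Form) (i : ℕ) : prime (iter A i) = iter (prime A) i := by
  induction i with
  | zero => exact prime_top
  | succ n ih => simp [iter, prime_subst, ih]

lemma occursIn_lev {X C : Form} (h : OccursIn X C) : lev X ≤ lev C := by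
  induction C with
  | atom i => simp_all [OccursIn]
  | natom i => simp_all [OccursIn]
  | var => simp_all [OccursIn]
  | and C D ihC ihD =>
      rcases h with h | h | h
      · simp [h]
      · exact le_trans (ihC h) (by simp [lev])
      · exact le_trans (ihD h) (by simp [lev])
  | or C D ihC ihD =>
      rcases h with h | h | h
      · simp [h]
      · exact le_trans (ihC h) (by simp [lev])
      · exact le_trans (ihD h) (by simp [lev])
  | box C ih =>
      rcases h with h | h
      · simp [h]
      · exact le_trans (ih h) (by simp [lev])
  | dia C ih =>
      rcases h with h | h
      · simp [h]
      · exact le_trans (ih h) (by simp [lev])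
  | mu C ih =>
      rcases h with h | h
      · simp [h]
      · exact le_trans (ih h) (Nat.le_succ _)
  | nu C ih =>
      rcases h with h | h
      · simp [h]
      · exact le_trans (ih h) (Nat.le_succ _)
  | nut C ih =>
      rcases h with h | h
      · simp [h]
      · exact le_trans (ih h) (Nat.le_succ _)

lemma occursIn_subst {E C D : Form} (h : OccursIn (nut E) (subst C D)) :
    OccursIn (nut E) C ∨ OccursIn (nut E) D := by
  induction C <;> simp_all [subst, OccursIn] <;> tauto

lemma occursIn_iter {E C : Form} {i : ℕ} (h : OccursIn (nut E) (iter C i)) :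
    OccursIn (nut E) C := by
  induction i with
  | zero => simp [iter, top, OccursIn] at h
  | succ n ih =>
      rcases occursIn_subst h with h | h
      · exact h
      · exact ih h

lemma occursIn_prime_lev {E C : Form} (h : OccursIn (nut E) (prime C)) :
    lev (nut E) ≤ lev C := by
  have := occursIn_lev h
  rwa [lev_prime] at this

def undia : Form → Form
  | dia F => F
  | F => F

lemma closedF_mu (A : Form) : (mu A).ClosedF := by simp [ClosedF]

lemma closedF_nu (A : Form) : (nu A).ClosedF := by simp [ClosedF]

lemma closedF_nut (A : Form) : (nut A).ClosedF := by simp [ClosedF]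

end Form

open Form

lemma eq_ins_of_mem {a : Form} {s : Sequent} (h : a ∈ s) : s = insert a s :=
  (Finset.insert_eq_self.mpr h).symm

lemma closedSeq_mono {Γ Γ' : Sequent} (h : ClosedSeq Γ') (hs : Γ ⊆ Γ') : ClosedSeq Γ :=
  fun C hC => h C (hs hC)

lemma closedSeq_insert {Γ : Sequent} {C : Form} (hC : C.ClosedF) (h : ClosedSeq Γ) :
    ClosedSeq (insert C Γ) := by
  intro D hD; rcases Finset.mem_insert.mp hD with rfl | hD
  · exact hC
  · exact h D hD

lemma closedSeq_union {Γ Δ : Sequent} (h1 : ClosedSeq Γ) (h2 : ClosedSeq Δ) :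
    ClosedSeq (Γ ∪ Δ) := by
  intro D hD; rcases Finset.mem_union.mp hD with hD | hD
  · exact h1 D hD
  · exact h2 D hD

lemma positive_mono {h : ℕ} {Γ Γ' : Sequent} (hp : Positive h Γ') (hs : Γ ⊆ Γ') :
    Positive h Γ := fun C hC => hp C (hs hC)

lemma positive_insert {h : ℕ} {Γ : Sequent} {C : Form}
    (hC : ∀ B, OccursIn (nut B) C → lev (nut B) < h) (hp : Positive h Γ) :
    Positive h (insert C Γ) := by
  intro D hD; rcases Finset.mem_insert.mp hD with rfl | hD
  · exact hC
  · exact hp D hD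

lemma positive_union {h : ℕ} {Γ Δ : Sequent} (h1 : Positive h Γ) (h2 : Positive h Δ) :
    Positive h (Γ ∪ Δ) := by
  intro D hD; rcases Finset.mem_union.mp hD with hD | hD
  · exact h1 D hD
  · exact h2 D hD

lemma positive_le {h h' : ℕ} {Γ : Sequent} (hp : Positive h Γ) (hh : h ≤ h') :
    Positive h' Γ := fun C hC B hB => lt_of_lt_of_le (hp C hC B hB) hh

section GenericSystem

variable {prev : Sequent → Prop} {k : ℕ}

lemma derW {c : Bool} {Γ Γ' : Sequent} (h : OmDerAux prev k c Γ) (hs : Γ ⊆ Γ') :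
    OmDerAux prev k c Γ' := by
  induction h generalizing Γ' with
  | ax c Γ i =>
      have h1 : Form.atom i ∈ Γ' := hs (by simp)
      have h2 : Form.natom i ∈ Γ' := hs (by simp)
      have e : Γ' = insert (Form.atom i) (insert (Form.natom i) Γ') := by
        rw [Finset.insert_eq_self.mpr h2, Finset.insert_eq_self.mpr h1]
      rw [e]; exact OmDerAux.ax _ _ i
  | orR c Γ A B hpre ih =>
      have h1 : Form.or A B ∈ Γ' := hs (by simp)
      rw [eq_ins_of_mem h1]
      refine OmDerAux.orR _ _ _ _ (ih ?_)
      refine Finset.insert_subset_insert _ (Finset.insert_subset_insert _ ?_)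
      exact fun x hx => hs (by simp [hx])
  | andR c Γ A B hp1 hp2 ih1 ih2 =>
      have h1 : Form.and A B ∈ Γ' := hs (by simp)
      have hsub : Γ ⊆ Γ' := fun x hx => hs (by simp [hx])
      rw [eq_ins_of_mem h1]
      exact OmDerAux.andR _ _ _ _ (ih1 (Finset.insert_subset_insert _ hsub))
        (ih2 (Finset.insert_subset_insert _ hsub))
  | boxR c Γ S A hpre ih =>
      have h1 : Form.box A ∈ Γ' := hs (by simp)
      have h2 : Γ.image Form.dia ⊆ Γ' := fun x hx => hs (Finset.mem_union_left _ hx)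
      have e : Γ' = Γ.image Form.dia ∪ insert (Form.box A) Γ' := by
        rw [Finset.insert_eq_self.mpr h1, Finset.union_eq_right.mpr h2]
      rw [e]; exact OmDerAux.boxR _ _ _ _ hpre
  | clo c Γ A hpre ih =>
      have h1 : Form.mu A ∈ Γ' := hs (by simp)
      rw [eq_ins_of_mem h1]
      refine OmDerAux.clo _ _ _ (ih ?_)
      exact Finset.insert_subset_insert _ (fun x hx => hs (by simp [hx]))
  | nuR c Γ A hpre ih =>
      have h1 : Form.nu A ∈ Γ' := hs (by simp)
      rw [eq_ins_of_mem h1]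
      refine OmDerAux.nuR _ _ _ (fun i => ih i ?_)
      exact Finset.insert_subset_insert _ (fun x hx => hs (by simp [hx]))
  | cut Γ A h1 h2 h3 hp1 hp2 ih1 ih2 =>
      exact OmDerAux.cut Γ' A h1 h2 h3 (ih1 (Finset.insert_subset_insert _ hs))
        (ih2 (Finset.insert_subset_insert _ hs))
  | omega c Γ A h hh1 hh2 hA hlev hprov ihprov =>
      have h1 : Form.prime (Form.compl (Form.mu A)) ∈ Γ' := hs (by simp)
      have hsub : Γ ⊆ Γ' := fun x hx => hs (by simp [hx])
      rw [eq_ins_of_mem h1]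
      exact OmDerAux.omega c Γ' A h hh1 hh2 hA hlev
        (fun Δ hc hp hpre => ihprov Δ hc hp hpre (Finset.union_subset_union_right hsub))
  | omegaT c Γ A h hh1 hh2 hA hlev hpre hprov ih ihprov =>
      exact OmDerAux.omegaT c Γ' A h hh1 hh2 hA hlev (ih (Finset.insert_subset_insert _ hs))
        (fun Δ hc hp hpre => ihprov Δ hc hp hpre (Finset.union_subset_union_right hs))

lemma cT {c : Bool} {Γ : Sequent} (h : OmDerAux prev k c Γ) : OmDerAux prev k true Γ := by
  induction h with
  | ax c Γ i => exact OmDerAux.ax _ _ i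
  | orR c Γ A B hpre ih => exact OmDerAux.orR _ _ _ _ ih
  | andR c Γ A B hp1 hp2 ih1 ih2 => exact OmDerAux.andR _ _ _ _ ih1 ih2
  | boxR c Γ S A hpre ih => exact OmDerAux.boxR _ _ _ _ ih
  | clo c Γ A hpre ih => exact OmDerAux.clo _ _ _ ih
  | nuR c Γ A hpre ih => exact OmDerAux.nuR _ _ _ ih
  | cut Γ A h1 h2 h3 hp1 hp2 ih1 ih2 => exact OmDerAux.cut Γ A h1 h2 h3 ih1 ih2
  | omega c Γ A h hh1 hh2 hA hlev hprov ihprov =>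
      exact OmDerAux.omega _ Γ A h hh1 hh2 hA hlev (fun Δ hc hp hpre => ihprov Δ hc hp hpre)
  | omegaT c Γ A h hh1 hh2 hA hlev hpre hprov ih ihprov =>
      exact OmDerAux.omegaT _ Γ A h hh1 hh2 hA hlev ih (fun Δ hc hp hpre => ihprov Δ hc hp hpre)

lemma topDer (c : Bool) (X : Sequent) : OmDerAux prev k c (insert Form.top X) := by
  have : OmDerAux prev k c (insert (Form.atom 0) (insert (Form.natom 0) X)) :=
    OmDerAux.ax _ _ 0
  exact OmDerAux.orR _ _ _ _ this

end GenericSystem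

def prevOf : ℕ → Sequent → Prop
  | 0 => fun _ => False
  | m+1 => OmProv m false

lemma omProv_eq (k : ℕ) (c : Bool) : OmProv k c = OmDerAux (prevOf k) k c := by
  cases k <;> rfl

lemma primeComplMu (A : Form) :
    Form.prime (Form.compl (Form.mu A)) = Form.nut (Form.prime (Form.compl A)) := rfl

lemma primeMu (A : Form) : Form.prime (Form.mu A) = Form.mu (Form.prime A) := rfl

lemma lev_primeComplMu (A : Form) :
    Form.lev (Form.prime (Form.compl (Form.mu A))) = Form.lev A + 1 := by
  simp [Form.lev_prime, Form.lev_compl, Form.lev]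

lemma nut_in_primeMu {B A : Form} (h : OccursIn (nut B) (Form.prime (Form.mu A))) :
    lev (nut B) ≤ lev A := by
  rw [primeMu] at h
  rcases h with h | h
  · cases h
  · exact Form.occursIn_prime_lev h

lemma closedF_primeMu (A : Form) : (Form.prime (Form.mu A)).ClosedF := by
  rw [primeMu]; trivial

/-- Positivity facts for premises of the structural rules. -/
lemma pos_prem_or {h : ℕ} {A B : Form} {Γ : Sequent}
    (hp : Positive h (insert (Form.or A B) Γ)) : Positive h (insert A (insert B Γ)) := by
  have hm := hp _ (Finset.mem_insert_self _ _)
  refine positive_insert (fun E hE => hm E (Or.inr (Or.inl hE))) ?_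
  refine positive_insert (fun E hE => hm E (Or.inr (Or.inr hE))) ?_
  exact positive_mono hp (Finset.subset_insert _ _)

lemma cs_prem_or {A B : Form} {Γ : Sequent}
    (hc : ClosedSeq (insert (Form.or A B) Γ)) : ClosedSeq (insert A (insert B Γ)) := by
  have hm := hc _ (Finset.mem_insert_self _ _)
  exact closedSeq_insert hm.1 (closedSeq_insert hm.2
    (closedSeq_mono hc (Finset.subset_insert _ _)))

lemma pos_prem_and {h : ℕ} {A B : Form} {Γ : Sequent}
    (hp : Positive h (insert (Form.and A B) Γ)) :
    Positive h (insert A Γ) ∧ Positive h (insert B Γ) := by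
  have hm := hp _ (Finset.mem_insert_self _ _)
  have hΓ := positive_mono hp (Finset.subset_insert _ _)
  exact ⟨positive_insert (fun E hE => hm E (Or.inr (Or.inl hE))) hΓ,
    positive_insert (fun E hE => hm E (Or.inr (Or.inr hE))) hΓ⟩

lemma cs_prem_and {A B : Form} {Γ : Sequent}
    (hc : ClosedSeq (insert (Form.and A B) Γ)) :
    ClosedSeq (insert A Γ) ∧ ClosedSeq (insert B Γ) := by
  have hm := hc _ (Finset.mem_insert_self _ _)
  have hΓ := closedSeq_mono hc (Finset.subset_insert _ _)
  exact ⟨closedSeq_insert hm.1 hΓ, closedSeq_insert hm.2 hΓ⟩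

lemma pos_prem_box {h : ℕ} {A : Form} {Γ S : Sequent}
    (hp : Positive h (Γ.image Form.dia ∪ insert (Form.box A) S)) :
    Positive h (insert A Γ) := by
  have hbox := hp (Form.box A) (Finset.mem_union_right _ (Finset.mem_insert_self _ _))
  refine positive_insert (fun E hE => hbox E (Or.inr hE)) ?_
  intro C hC E hE
  have : Form.dia C ∈ Γ.image Form.dia ∪ insert (Form.box A) S :=
    Finset.mem_union_left _ (Finset.mem_image_of_mem _ hC)
  exact hp _ this E (Or.inr hE)

lemma cs_prem_box {A : Form} {Γ S : Sequent}
    (hc : ClosedSeq (Γ.image Form.dia ∪ insert (Form.box A) S)) :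
    ClosedSeq (insert A Γ) := by
  have hbox := hc (Form.box A) (Finset.mem_union_right _ (Finset.mem_insert_self _ _))
  refine closedSeq_insert hbox ?_
  intro C hC
  exact hc (Form.dia C) (Finset.mem_union_left _ (Finset.mem_image_of_mem _ hC))

lemma pos_prem_clo {h : ℕ} {A : Form} {Γ : Sequent}
    (hp : Positive h (insert (Form.mu A) Γ)) :
    Positive h (insert (Form.subst A (Form.mu A)) Γ) := by
  have hm := hp _ (Finset.mem_insert_self _ _)
  refine positive_insert (fun E hE => ?_) (positive_mono hp (Finset.subset_insert _ _))
  rcases Form.occursIn_subst hE with hE | hE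
  · exact hm E (Or.inr hE)
  · exact hm E hE

lemma cs_prem_clo {A : Form} {Γ : Sequent}
    (hc : ClosedSeq (insert (Form.mu A) Γ)) :
    ClosedSeq (insert (Form.subst A (Form.mu A)) Γ) :=
  closedSeq_insert (Form.closedF_subst (Form.closedF_mu A) A)
    (closedSeq_mono hc (Finset.subset_insert _ _))

lemma pos_prem_nu {h : ℕ} {A : Form} {Γ : Sequent} {i : ℕ}
    (hp : Positive h (insert (Form.nu A) Γ)) :
    Positive h (insert (Form.iter A i) Γ) := by
  have hm := hp _ (Finset.mem_insert_self _ _)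
  refine positive_insert (fun E hE => hm E (Or.inr (Form.occursIn_iter hE)))
    (positive_mono hp (Finset.subset_insert _ _))

lemma cs_prem_nu {A : Form} {Γ : Sequent} {i : ℕ}
    (hc : ClosedSeq (insert (Form.nu A) Γ)) :
    ClosedSeq (insert (Form.iter A i) Γ) :=
  closedSeq_insert (Form.closedF_iter A i) (closedSeq_mono hc (Finset.subset_insert _ _))

lemma pos_insert_primeMu {h g : ℕ} {A : Form} {Δ : Sequent}
    (hlev : Form.lev (Form.prime (Form.compl (Form.mu A))) = g) (hg : g ≤ h)
    (hp : Positive h Δ) : Positive h (insert (Form.prime (Form.mu A)) Δ) := by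
  refine positive_insert (fun E hE => ?_) hp
  have h1 := nut_in_primeMu hE
  have h2 : Form.lev A + 1 = g := by rw [← lev_primeComplMu A, hlev]
  omega

/-- Lift: derivations in `M^Ω_j` are derivations in `M^Ω_{j+1}`;
Lower: cut-free derivations of positive sequents collapse one level. -/
theorem liftlow : ∀ j : ℕ,
    (∀ (c : Bool) (Γ : Sequent), OmDerAux (prevOf j) j c Γ →
      OmDerAux (prevOf (j+1)) (j+1) c Γ) ∧
    (∀ (c : Bool) (Γ : Sequent), OmDerAux (prevOf (j+1)) (j+1) c Γ → c = false →
      ∀ h, h ≤ j+1 → Positive h Γ → ClosedSeq Γ →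
        OmDerAux (prevOf j) j false Γ) := by
  intro j
  induction j with
  | zero =>
      constructor
      · -- LIFT 0
        intro c Γ d
        induction d with
        | ax c Γ i => exact OmDerAux.ax _ _ i
        | orR c Γ A B hpre ih => exact OmDerAux.orR _ _ _ _ ih
        | andR c Γ A B h1 h2 ih1 ih2 => exact OmDerAux.andR _ _ _ _ ih1 ih2
        | boxR c Γ S A hpre ih => exact OmDerAux.boxR _ _ _ _ ih
        | clo c Γ A hpre ih => exact OmDerAux.clo _ _ _ ih
        | nuR c Γ A hpre ih => exact OmDerAux.nuR _ _ _ (fun i => ih i)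
        | cut Γ A h1 h2 h3 hp1 hp2 ih1 ih2 =>
            exact OmDerAux.cut Γ A h1 h2 (le_trans h3 (by omega)) ih1 ih2
        | omega c Γ A g hg1 hg2 hA hlev hprov ihprov => omega
        | omegaT c Γ A g hg1 hg2 hA hlev hpre hprov ih ihprov => omega
      · -- LOW 0
        intro c Γ d
        induction d with
        | ax c Γ i => intro _ h hh hp hc; exact OmDerAux.ax _ _ i
        | orR c Γ A B hpre ih =>
            intro hc h hh hp hcs
            exact OmDerAux.orR _ _ _ _
              (ih hc h hh (pos_prem_or hp) (cs_prem_or hcs))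
        | andR c Γ A B hd1 hd2 ih1 ih2 =>
            intro hc h hh hp hcs
            exact OmDerAux.andR _ _ _ _
              (ih1 hc h hh (pos_prem_and hp).1 (cs_prem_and hcs).1)
              (ih2 hc h hh (pos_prem_and hp).2 (cs_prem_and hcs).2)
        | boxR c Γ S A hpre ih =>
            intro hc h hh hp hcs
            exact OmDerAux.boxR _ _ _ _
              (ih hc h hh (pos_prem_box hp) (cs_prem_box hcs))
        | clo c Γ A hpre ih =>
            intro hc h hh hp hcs
            exact OmDerAux.clo _ _ _ (ih hc h hh (pos_prem_clo hp) (cs_prem_clo hcs))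
        | nuR c Γ A hpre ih =>
            intro hc h hh hp hcs
            exact OmDerAux.nuR _ _ _ (fun i => ih i hc h hh (pos_prem_nu hp) (cs_prem_nu hcs))
        | cut Γ A h1 h2 h3 hp1 hp2 ih1 ih2 => intro hc; cases hc
        | omega c Γ A g hg1 hg2 hA hlev hprov ihprov =>
            intro hc h hh hp hcs
            exfalso
            have hself : Form.lev (Form.nut (Form.prime (Form.compl A))) < h := by
              refine hp _ (Finset.mem_insert_self _ _) _ ?_
              rw [primeComplMu]; exact Or.inl rfl
            rw [← primeComplMu, hlev] at hself
            omega
        | omegaT c Γ A g hg1 hg2 hA hlev hpre hprov ih ihprov =>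
            intro hc h hh hp hcs
            -- g ≥ h is forced (g = 1, h ≤ 1); use the discharge trick
            have hg : h ≤ g := by omega
            have hcs1 : ClosedSeq (insert (Form.prime (Form.mu A)) Γ) :=
              closedSeq_insert (closedF_primeMu A) hcs
            have hp1 : Positive g (insert (Form.prime (Form.mu A)) Γ) :=
              pos_insert_primeMu hlev (le_refl g) (positive_le hp hg)
            have hlowpre : OmDerAux (prevOf 0) 0 false (insert (Form.prime (Form.mu A)) Γ) :=
              ih hc g hg2 hp1 hcs1
            have hwit : prevOf 1 (insert (Form.prime (Form.mu A)) Γ) := by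
              rw [show prevOf 1 = OmProv 0 false from rfl, omProv_eq]; exact hlowpre
            have hout := ihprov Γ hcs (positive_le hp hg) hwit hc h hh
              (by rw [Finset.union_self]; exact hp) (by rw [Finset.union_self]; exact hcs)
            rwa [Finset.union_self] at hout
  | succ j ih =>
      obtain ⟨ihLift, ihLow⟩ := ih
      have hliftP : ∀ Θ, prevOf (j+1) Θ → prevOf (j+2) Θ := by
        intro Θ hΘ
        rw [show prevOf (j+2) = OmProv (j+1) false from rfl, omProv_eq]
        rw [show prevOf (j+1) = OmProv j false from rfl, omProv_eq] at hΘ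
        exact ihLift false Θ hΘ
      constructor
      · -- LIFT (j+1)
        intro c Γ d
        induction d with
        | ax c Γ i => exact OmDerAux.ax _ _ i
        | orR c Γ A B hpre ih' => exact OmDerAux.orR _ _ _ _ ih'
        | andR c Γ A B h1 h2 ih1 ih2 => exact OmDerAux.andR _ _ _ _ ih1 ih2
        | boxR c Γ S A hpre ih' => exact OmDerAux.boxR _ _ _ _ ih'
        | clo c Γ A hpre ih' => exact OmDerAux.clo _ _ _ ih'
        | nuR c Γ A hpre ih' => exact OmDerAux.nuR _ _ _ (fun i => ih' i)
        | cut Γ A h1 h2 h3 hp1 hp2 ih1 ih2 =>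
            exact OmDerAux.cut Γ A h1 h2 (le_trans h3 (by omega)) ih1 ih2
        | omega c Γ A g hg1 hg2 hA hlev hprov ihprov =>
            refine OmDerAux.omega c Γ A g hg1 (by omega) hA hlev ?_
            intro Δ hcΔ hpΔ hpre
            refine ihprov Δ hcΔ hpΔ ?_
            -- lower the witness from OmProv (j+1) false to prevOf (j+1)
            rw [show prevOf (j+2) = OmProv (j+1) false from rfl, omProv_eq] at hpre
            rw [show prevOf (j+1) = OmProv j false from rfl, omProv_eq]
            refine ihLow false _ hpre rfl g (by omega) ?_ ?_
            · exact pos_insert_primeMu hlev (le_refl g) hpΔ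
            · exact closedSeq_insert (closedF_primeMu A) hcΔ
        | omegaT c Γ A g hg1 hg2 hA hlev hpre hprov ih' ihprov =>
            refine OmDerAux.omegaT c Γ A g hg1 (by omega) hA hlev ih' ?_
            intro Δ hcΔ hpΔ hpre'
            refine ihprov Δ hcΔ hpΔ ?_
            rw [show prevOf (j+2) = OmProv (j+1) false from rfl, omProv_eq] at hpre'
            rw [show prevOf (j+1) = OmProv j false from rfl, omProv_eq]
            refine ihLow false _ hpre' rfl g (by omega) ?_ ?_
            · exact pos_insert_primeMu hlev (le_refl g) hpΔ
            · exact closedSeq_insert (closedF_primeMu A) hcΔ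
      · -- LOW (j+1) : system (j+2) → system (j+1)
        intro c Γ d
        induction d with
        | ax c Γ i => intro _ h hh hp hc; exact OmDerAux.ax _ _ i
        | orR c Γ A B hpre ih' =>
            intro hc h hh hp hcs
            exact OmDerAux.orR _ _ _ _ (ih' hc h hh (pos_prem_or hp) (cs_prem_or hcs))
        | andR c Γ A B hd1 hd2 ih1 ih2 =>
            intro hc h hh hp hcs
            exact OmDerAux.andR _ _ _ _
              (ih1 hc h hh (pos_prem_and hp).1 (cs_prem_and hcs).1)
              (ih2 hc h hh (pos_prem_and hp).2 (cs_prem_and hcs).2)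
        | boxR c Γ S A hpre ih' =>
            intro hc h hh hp hcs
            exact OmDerAux.boxR _ _ _ _ (ih' hc h hh (pos_prem_box hp) (cs_prem_box hcs))
        | clo c Γ A hpre ih' =>
            intro hc h hh hp hcs
            exact OmDerAux.clo _ _ _ (ih' hc h hh (pos_prem_clo hp) (cs_prem_clo hcs))
        | nuR c Γ A hpre ih' =>
            intro hc h hh hp hcs
            exact OmDerAux.nuR _ _ _
              (fun i => ih' i hc h hh (pos_prem_nu hp) (cs_prem_nu hcs))
        | cut Γ A h1 h2 h3 hp1 hp2 ih1 ih2 => intro hc; cases hc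
        | omega c Γ A g hg1 hg2 hA hlev hprov ihprov =>
            intro hc h hh hp hcs
            -- positivity forces g < h
            have hself : Form.lev (Form.nut (Form.prime (Form.compl A))) < h := by
              refine hp _ (Finset.mem_insert_self _ _) _ ?_
              rw [primeComplMu]; exact Or.inl rfl
            rw [← primeComplMu, hlev] at hself
            have hΓpos : Positive h Γ := positive_mono hp (Finset.subset_insert _ _)
            have hΓcs : ClosedSeq Γ := closedSeq_mono hcs (Finset.subset_insert _ _)
            refine OmDerAux.omega false Γ A g hg1 (by omega) hA hlev ?_
            intro Δ hcΔ hpΔ hpre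
            have hout := ihprov Δ hcΔ hpΔ (hliftP _ hpre) hc h hh
              (positive_union (positive_le hpΔ (by omega)) hΓpos)
              (closedSeq_union hcΔ hΓcs)
            exact hout
        | omegaT c Γ A g hg1 hg2 hA hlev hpre hprov ih' ihprov =>
            intro hc h hh hp hcs
            by_cases hgh : g < h
            · -- rebuild
              refine OmDerAux.omegaT false Γ A g hg1 (by omega) hA hlev ?_ ?_
              · exact ih' hc h hh (pos_insert_primeMu hlev (by omega) hp)
                  (closedSeq_insert (closedF_primeMu A) hcs)
              · intro Δ hcΔ hpΔ hpre'
                exact ihprov Δ hcΔ hpΔ (hliftP _ hpre') hc h hh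
                  (positive_union (positive_le hpΔ (by omega)) hp)
                  (closedSeq_union hcΔ hcs)
            · -- discharge
              have hg : h ≤ g := by omega
              have hcs1 : ClosedSeq (insert (Form.prime (Form.mu A)) Γ) :=
                closedSeq_insert (closedF_primeMu A) hcs
              have hp1 : Positive g (insert (Form.prime (Form.mu A)) Γ) :=
                pos_insert_primeMu hlev (le_refl g) (positive_le hp hg)
              have hlowpre := ih' hc g hg2 hp1 hcs1
              have hwit : prevOf (j+2) (insert (Form.prime (Form.mu A)) Γ) := by
                rw [show prevOf (j+2) = OmProv (j+1) false from rfl, omProv_eq]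
                exact hlowpre
              have hout := ihprov Γ hcs (positive_le hp hg) hwit hc h hh
                (by rw [Finset.union_self]; exact hp) (by rw [Finset.union_self]; exact hcs)
              rwa [Finset.union_self] at hout

/-- Primed identity `Σ, (μA)', (¬μA)'` via the Ω-rule and lifting. -/
lemma pident {k : ℕ} {A : Form} (hA : A.IsL0) (hlev : (Form.mu A).lev ≤ k) (X : Sequent) :
    OmDerAux (prevOf k) k true
      (insert (Form.prime (Form.mu A)) (insert (Form.prime (Form.compl (Form.mu A))) X)) := by
  have hlev' : Form.lev A + 1 ≤ k := by simpa [Form.lev] using hlev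
  cases k with
  | zero => omega
  | succ m =>
    rw [Finset.insert_comm]
    refine OmDerAux.omega true _ A (Form.lev A + 1) (by omega) (by omega) hA
      (lev_primeComplMu A) ?_
    intro Δ hcs hpos hpre
    rw [show prevOf (m+1) = OmProv m false from rfl, omProv_eq] at hpre
    have hlift := (liftlow m).1 false _ hpre
    refine derW (cT hlift) ?_
    intro x hx
    rcases Finset.mem_insert.mp hx with rfl | hx
    · exact Finset.mem_union_right _ (Finset.mem_insert_self _ _)
    · exact Finset.mem_union_left _ hx

/-- `sT A F = F'(t)` and `sR A F = F(μA)` : the two substitution images used in the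
replacement lemmas. -/
def sT (A F : Form) : Form := Form.subst (Form.prime F) (Form.prime (Form.mu A))
def sR (A F : Form) : Form := Form.subst F (Form.mu A)

lemma sT_var (A : Form) : sT A Form.var = Form.prime (Form.mu A) := rfl
lemma sR_var (A : Form) : sR A Form.var = Form.mu A := rfl
lemma sT_or (A F₁ F₂ : Form) : sT A (Form.or F₁ F₂) = Form.or (sT A F₁) (sT A F₂) := rfl
lemma sR_or (A F₁ F₂ : Form) : sR A (Form.or F₁ F₂) = Form.or (sR A F₁) (sR A F₂) := rfl
lemma sT_and (A F₁ F₂ : Form) : sT A (Form.and F₁ F₂) = Form.and (sT A F₁) (sT A F₂) := rfl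
lemma sR_and (A F₁ F₂ : Form) : sR A (Form.and F₁ F₂) = Form.and (sR A F₁) (sR A F₂) := rfl
lemma sT_box (A F₁ : Form) : sT A (Form.box F₁) = Form.box (sT A F₁) := rfl
lemma sR_box (A F₁ : Form) : sR A (Form.box F₁) = Form.box (sR A F₁) := rfl
lemma sT_dia (A F₁ : Form) : sT A (Form.dia F₁) = Form.dia (sT A F₁) := rfl
lemma sR_dia (A F₁ : Form) : sR A (Form.dia F₁) = Form.dia (sR A F₁) := rfl

lemma sT_closed {A F : Form} (h : F.ClosedF) : sT A F = Form.prime F :=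
  Form.subst_of_closed (Form.closedF_prime h) _
lemma sR_closed {A F : Form} (h : F.ClosedF) : sR A F = F :=
  Form.subst_of_closed h _

lemma sT_eq_or {A F A₂ B₂ : Form} (hFV : ¬F.ClosedF) (h : sT A F = Form.or A₂ B₂) :
    ∃ F₁ F₂, F = Form.or F₁ F₂ ∧ A₂ = sT A F₁ ∧ B₂ = sT A F₂ := by
  cases F <;> simp_all [sT, Form.prime, Form.subst, Form.ClosedF] <;> tauto

lemma sT_eq_and {A F A₂ B₂ : Form} (hFV : ¬F.ClosedF) (h : sT A F = Form.and A₂ B₂) :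
    ∃ F₁ F₂, F = Form.and F₁ F₂ ∧ A₂ = sT A F₁ ∧ B₂ = sT A F₂ := by
  cases F <;> simp_all [sT, Form.prime, Form.subst, Form.ClosedF] <;> tauto

lemma sT_eq_box {A F A₂ : Form} (hFV : ¬F.ClosedF) (h : sT A F = Form.box A₂) :
    ∃ F₁, F = Form.box F₁ ∧ A₂ = sT A F₁ := by
  cases F <;> simp_all [sT, Form.prime, Form.subst, Form.ClosedF]

lemma sT_eq_dia {A F A₂ : Form} (hFV : ¬F.ClosedF) (h : sT A F = Form.dia A₂) :
    ∃ F₁, F = Form.dia F₁ ∧ A₂ = sT A F₁ := by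
  cases F <;> simp_all [sT, Form.prime, Form.subst, Form.ClosedF]

lemma sT_eq_mu {A F C : Form} (hFV : ¬F.ClosedF) (h : sT A F = Form.mu C) :
    F = Form.var ∧ C = Form.prime A := by
  cases F <;> simp_all [sT, Form.prime, Form.subst, Form.ClosedF]

lemma sT_ne_atom {A F : Form} (hFV : ¬F.ClosedF) (i : ℕ) : sT A F ≠ Form.atom i := by
  cases F <;> simp_all [sT, Form.prime, Form.subst, Form.ClosedF]

lemma sT_ne_natom {A F : Form} (hFV : ¬F.ClosedF) (i : ℕ) : sT A F ≠ Form.natom i := by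
  cases F <;> simp_all [sT, Form.prime, Form.subst, Form.ClosedF]

lemma sT_ne_nu {A F C : Form} (hFV : ¬F.ClosedF) : sT A F ≠ Form.nu C := by
  cases F <;> simp_all [sT, Form.prime, Form.subst, Form.ClosedF]

lemma sT_ne_nut {A F C : Form} (hFV : ¬F.ClosedF) : sT A F ≠ Form.nut C := by
  cases F <;> simp_all [sT, Form.prime, Form.subst, Form.ClosedF]

/-- Canonical decomposition of a subset of `Δ ∪ Ξ.image σ`. -/
lemma coverSplit (Δ : Sequent) (Ξ : Finset Form) (σ : Form → Form) {Γ₀ : Sequent}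
    (h : Γ₀ ⊆ Δ ∪ Ξ.image σ) :
    Γ₀ = (Γ₀ ∩ Δ) ∪ (Ξ.filter (fun F => σ F ∈ Γ₀)).image σ := by
  ext x
  simp only [Finset.mem_union, Finset.mem_inter, Finset.mem_image, Finset.mem_filter]
  constructor
  · intro hx
    rcases Finset.mem_union.mp (h hx) with hx' | hx'
    · exact Or.inl ⟨hx, hx'⟩
    · rcases Finset.mem_image.mp hx' with ⟨F, hF, rfl⟩
      exact Or.inr ⟨F, ⟨hF, hx⟩, rfl⟩
  · rintro (⟨hx, _⟩ | ⟨F, ⟨_, hx⟩, rfl⟩) <;> assumption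

open Classical in
noncomputable def selD (A F : Form) : Finset Form := if F.ClosedF then {sT A F} else ∅
open Classical in
noncomputable def selX (F : Form) : Finset Form := if F.ClosedF then ∅ else {F}
open Classical in
noncomputable def selV (A F : Form) : Form := if F.ClosedF then Form.prime F else sR A F

open Classical

lemma selT (A F : Form) : selD A F ∪ (selX F).image (sT A) = {sT A F} := by
  by_cases h : F.ClosedF <;> simp [selD, selX, h]

lemma selR (A F : Form) : selD A F ∪ (selX F).image (sR A) = {selV A F} := by
  by_cases h : F.ClosedF <;> simp [selD, selX, selV, h, sT_closed]

lemma selX_mem {F G : Form} (h : G ∈ selX F) : G = F ∧ ¬F.ClosedF := by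
  by_cases hc : F.ClosedF <;> simp_all [selX, hc]

lemma mMu (A : Form) : (Form.mu A).lev = A.lev + 1 := by simp [Form.lev]

lemma splitOne {σ : Form → Form} {Γ₀ Δ : Sequent} {Ξ : Finset Form}
    (h : Γ₀ ⊆ Δ ∪ Ξ.image σ) {D₁ X₁ : Finset Form} {a : Form}
    (h1 : D₁ ∪ X₁.image σ = {a}) :
    insert a Γ₀ = (D₁ ∪ Γ₀ ∩ Δ) ∪ (X₁ ∪ Ξ.filter (fun F => σ F ∈ Γ₀)).image σ := by
  conv_lhs => rw [coverSplit Δ Ξ σ h]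
  rw [Finset.image_union, Finset.insert_eq, ← h1]
  ext x
  simp only [Finset.mem_union]
  tauto

lemma splitPair {σ : Form → Form} {Γ₀ Δ : Sequent} {Ξ : Finset Form}
    (h : Γ₀ ⊆ Δ ∪ Ξ.image σ) {D₁ X₁ D₂ X₂ : Finset Form} {a b : Form}
    (h1 : D₁ ∪ X₁.image σ = {a}) (h2 : D₂ ∪ X₂.image σ = {b}) :
    insert a (insert b Γ₀) =
      ((D₁ ∪ D₂) ∪ Γ₀ ∩ Δ) ∪ ((X₁ ∪ X₂) ∪ Ξ.filter (fun F => σ F ∈ Γ₀)).image σ := by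
  conv_lhs => rw [coverSplit Δ Ξ σ h]
  rw [Finset.image_union, Finset.image_union, Finset.insert_eq, Finset.insert_eq, ← h1, ← h2]
  ext x
  simp only [Finset.mem_union]
  tauto

lemma selOutOneG {A : Form} {σρ : Form → Form} {v₁ : Form} {Δ : Sequent} {Ξ : Finset Form}
    {Γ₀ : Sequent} (F₁ : Form) (hsel : selD A F₁ ∪ (selX F₁).image σρ = {v₁}) :
    (selD A F₁ ∪ Γ₀ ∩ Δ) ∪ (selX F₁ ∪ Ξ.filter (fun F => sT A F ∈ Γ₀)).image σρ
      ⊆ insert v₁ (Δ ∪ Ξ.image σρ) := by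
  rw [Finset.image_union]
  intro x hx
  simp only [Finset.mem_union] at hx
  rcases hx with (hx | hx) | (hx | hx)
  · have hs : x ∈ ({v₁} : Finset Form) := by
      rw [← hsel]; exact Finset.mem_union_left _ hx
    rw [Finset.mem_singleton] at hs
    rw [hs]; exact Finset.mem_insert_self _ _
  · exact Finset.mem_insert_of_mem (Finset.mem_union_left _ (Finset.mem_of_mem_inter_right hx))
  · have hs : x ∈ ({v₁} : Finset Form) := by
      rw [← hsel]; exact Finset.mem_union_right _ hx
    rw [Finset.mem_singleton] at hs
    rw [hs]; exact Finset.mem_insert_self _ _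
  · exact Finset.mem_insert_of_mem
      (Finset.mem_union_right _ (Finset.image_subset_image (Finset.filter_subset _ _) hx))

lemma selOutOne {A : Form} {Δ : Sequent} {Ξ : Finset Form} {Γ₀ : Sequent} (F₁ : Form) :
    (selD A F₁ ∪ Γ₀ ∩ Δ) ∪ (selX F₁ ∪ Ξ.filter (fun F => sT A F ∈ Γ₀)).image (sR A)
      ⊆ insert (selV A F₁) (Δ ∪ Ξ.image (sR A)) :=
  selOutOneG (Γ₀ := Γ₀) F₁ (selR A F₁)

lemma selOutPairG {A : Form} {σρ : Form → Form} {v₁ v₂ : Form} {Δ : Sequent}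
    {Ξ : Finset Form} {Γ₀ : Sequent} (F₁ F₂ : Form)
    (hsel1 : selD A F₁ ∪ (selX F₁).image σρ = {v₁})
    (hsel2 : selD A F₂ ∪ (selX F₂).image σρ = {v₂}) :
    ((selD A F₁ ∪ selD A F₂) ∪ Γ₀ ∩ Δ) ∪
      ((selX F₁ ∪ selX F₂) ∪ Ξ.filter (fun F => sT A F ∈ Γ₀)).image σρ
      ⊆ insert v₁ (insert v₂ (Δ ∪ Ξ.image σρ)) := by
  rw [Finset.image_union, Finset.image_union]
  intro x hx
  simp only [Finset.mem_union] at hx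
  rcases hx with ((hx | hx) | hx) | ((hx | hx) | hx)
  · have hs : x ∈ ({v₁} : Finset Form) := by
      rw [← hsel1]; exact Finset.mem_union_left _ hx
    rw [Finset.mem_singleton] at hs
    rw [hs]; exact Finset.mem_insert_self _ _
  · have hs : x ∈ ({v₂} : Finset Form) := by
      rw [← hsel2]; exact Finset.mem_union_left _ hx
    rw [Finset.mem_singleton] at hs
    rw [hs]; exact Finset.mem_insert_of_mem (Finset.mem_insert_self _ _)
  · exact Finset.mem_insert_of_mem (Finset.mem_insert_of_mem
      (Finset.mem_union_left _ (Finset.mem_of_mem_inter_right hx)))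
  · have hs : x ∈ ({v₁} : Finset Form) := by
      rw [← hsel1]; exact Finset.mem_union_right _ hx
    rw [Finset.mem_singleton] at hs
    rw [hs]; exact Finset.mem_insert_self _ _
  · have hs : x ∈ ({v₂} : Finset Form) := by
      rw [← hsel2]; exact Finset.mem_union_right _ hx
    rw [Finset.mem_singleton] at hs
    rw [hs]; exact Finset.mem_insert_of_mem (Finset.mem_insert_self _ _)
  · exact Finset.mem_insert_of_mem (Finset.mem_insert_of_mem
      (Finset.mem_union_right _ (Finset.image_subset_image (Finset.filter_subset _ _) hx)))

lemma selOutPair {A : Form} {Δ : Sequent} {Ξ : Finset Form} {Γ₀ : Sequent} (F₁ F₂ : Form) :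
    ((selD A F₁ ∪ selD A F₂) ∪ Γ₀ ∩ Δ) ∪
      ((selX F₁ ∪ selX F₂) ∪ Ξ.filter (fun F => sT A F ∈ Γ₀)).image (sR A)
      ⊆ insert (selV A F₁) (insert (selV A F₂) (Δ ∪ Ξ.image (sR A))) :=
  selOutPairG (Γ₀ := Γ₀) F₁ F₂ (selR A F₁) (selR A F₂)

/-- The primed-substitution image used for the embedding of the induction rule. -/
def sB (B F : Form) : Form := Form.prime (Form.subst F B)

lemma sB_or (B F₁ F₂ : Form) : sB B (Form.or F₁ F₂) = Form.or (sB B F₁) (sB B F₂) := rfl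
lemma sB_and (B F₁ F₂ : Form) : sB B (Form.and F₁ F₂) = Form.and (sB B F₁) (sB B F₂) := rfl
lemma sB_box (B F₁ : Form) : sB B (Form.box F₁) = Form.box (sB B F₁) := rfl
lemma sB_dia (B F₁ : Form) : sB B (Form.dia F₁) = Form.dia (sB B F₁) := rfl
lemma sB_var (B : Form) : sB B Form.var = Form.prime B := rfl
lemma sB_closed {F : Form} (B : Form) (h : F.ClosedF) : sB B F = Form.prime F := by
  rw [sB, Form.subst_of_closed h]

lemma selRB (A B F : Form) : selD A F ∪ (selX F).image (sB B) = {sB B F} := by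
  by_cases h : F.ClosedF
  · simp [selD, selX, h, sT_closed, sB_closed B h]
  · simp [selD, selX, h]

lemma splitIns1 {σ : Form → Form} {Γ₀ Δ : Sequent} {Ξ : Finset Form}
    (h : Γ₀ ⊆ Δ ∪ Ξ.image σ) (x : Form) :
    insert x Γ₀ = insert x (Γ₀ ∩ Δ) ∪ (Ξ.filter (fun F => σ F ∈ Γ₀)).image σ := by
  conv_lhs => rw [coverSplit Δ Ξ σ h]
  rw [Finset.insert_union]

lemma splitIns2 {σ : Form → Form} {Γ₀ Δ : Sequent} {Ξ : Finset Form}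
    (h : Γ₀ ⊆ Δ ∪ Ξ.image σ) (x y : Form) :
    insert x (insert y Γ₀) =
      insert x (insert y (Γ₀ ∩ Δ)) ∪ (Ξ.filter (fun F => σ F ∈ Γ₀)).image σ := by
  conv_lhs => rw [coverSplit Δ Ξ σ h]
  rw [Finset.insert_union, Finset.insert_union]

lemma outIns0 {Δ : Sequent} {Ξ : Finset Form} {Γ₀ : Sequent} {σρ : Form → Form}
    {P : Form → Prop} [DecidablePred P] :
    (Γ₀ ∩ Δ) ∪ (Ξ.filter P).image σρ ⊆ Δ ∪ Ξ.image σρ :=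
  Finset.union_subset_union Finset.inter_subset_right
    (Finset.image_subset_image (Finset.filter_subset _ _))

lemma outIns1 {Δ : Sequent} {Ξ : Finset Form} {Γ₀ : Sequent} {σρ : Form → Form}
    {P : Form → Prop} [DecidablePred P] (a : Form) :
    insert a (Γ₀ ∩ Δ) ∪ (Ξ.filter P).image σρ ⊆ insert a (Δ ∪ Ξ.image σρ) := by
  rw [Finset.insert_union]
  exact Finset.insert_subset_insert _ outIns0

lemma outIns2 {Δ : Sequent} {Ξ : Finset Form} {Γ₀ : Sequent} {σρ : Form → Form}
    {P : Form → Prop} [DecidablePred P] (a b : Form) :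
    insert a (insert b (Γ₀ ∩ Δ)) ∪ (Ξ.filter P).image σρ
      ⊆ insert a (insert b (Δ ∪ Ξ.image σρ)) := by
  rw [Finset.insert_union, Finset.insert_union]
  exact Finset.insert_subset_insert _ (Finset.insert_subset_insert _ outIns0)

lemma outUni {Δ Δ₂ : Sequent} {Ξ : Finset Form} {Γ₀ : Sequent} {σρ : Form → Form}
    {P : Form → Prop} [DecidablePred P] :
    (Δ₂ ∪ Γ₀ ∩ Δ) ∪ (Ξ.filter P).image σρ ⊆ Δ₂ ∪ (Δ ∪ Ξ.image σρ) := by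
  rw [Finset.union_assoc]
  exact Finset.union_subset_union (le_refl Δ₂) outIns0

/-- The key replacement lemma: a cut-free `M^Ω_j` derivation of an
`lev(μA)`-positive, closed sequent `Δ ∪ Ξ[F ↦ F'((μA)')]` is transformed into an
`M^Ω_{j+1}` derivation of `Δ ∪ Ξ[F ↦ F(μA)]`, given depriming at lower levels. -/
lemma ureplN {j : ℕ} {A : Form} (hA : A.IsL0) (hlevA : (Form.mu A).lev ≤ j + 1)
    (iddep : ∀ C : Form, C.IsL0 → C.ClosedF → C.lev < (Form.mu A).lev →
      ∀ X : Sequent, OmDerAux (prevOf (j+1)) (j+1) true (insert (Form.prime C) X) →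
        OmDerAux (prevOf (j+1)) (j+1) true (insert C X))
    {c : Bool} {Θ : Sequent} (d : OmDerAux (prevOf j) j c Θ) :
    c = false → ∀ (Δ Ξ : Finset Form), Θ = Δ ∪ Ξ.image (sT A) →
    (∀ F ∈ Ξ, F.IsL0 ∧ ¬F.ClosedF ∧ F.lev ≤ A.lev) →
    Positive (Form.mu A).lev Θ → ClosedSeq Θ →
    OmDerAux (prevOf (j+1)) (j+1) true (Δ ∪ Ξ.image (sR A)) := by
  have lowWit : ∀ (Θ' : Sequent) (g : ℕ), 1 ≤ g → g ≤ j → Positive g Θ' → ClosedSeq Θ' →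
      OmDerAux (prevOf j) j false Θ' → prevOf j Θ' := by
    intro Θ' g hg1 hgj hp hcs hd
    cases j with
    | zero => omega
    | succ n =>
        rw [show prevOf (n+1) = OmProv n false from rfl, omProv_eq]
        exact (liftlow n).2 false Θ' hd rfl g hgj hp hcs
  have hconv : ∀ (F₁ : Form), F₁.IsL0 → F₁.lev ≤ A.lev → ∀ (W : Sequent),
      OmDerAux (prevOf (j+1)) (j+1) true (insert (selV A F₁) W) →
      OmDerAux (prevOf (j+1)) (j+1) true (insert (sR A F₁) W) := by
    intro F₁ h1 hl W hd
    by_cases hcl : F₁.ClosedF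
    · rw [selV, if_pos hcl] at hd
      rw [sR_closed hcl]
      exact iddep F₁ h1 hcl (by rw [mMu]; omega) W hd
    · rwa [selV, if_neg hcl] at hd
  induction d with
  | ax c' Γ₀ i =>
      intro hc Δ Ξ hsplit hΞ hpos hcs
      have hat : Form.atom i ∈ Δ := by
        have hx : Form.atom i ∈ Δ ∪ Ξ.image (sT A) := by rw [← hsplit]; simp
        rcases Finset.mem_union.mp hx with hx | hx
        · exact hx
        · obtain ⟨F, hF, hEq⟩ := Finset.mem_image.mp hx
          exact absurd hEq (sT_ne_atom (hΞ F hF).2.1 i)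
      have hnat : Form.natom i ∈ Δ := by
        have hx : Form.natom i ∈ Δ ∪ Ξ.image (sT A) := by rw [← hsplit]; simp
        rcases Finset.mem_union.mp hx with hx | hx
        · exact hx
        · obtain ⟨F, hF, hEq⟩ := Finset.mem_image.mp hx
          exact absurd hEq (sT_ne_natom (hΞ F hF).2.1 i)
      have e : Δ ∪ Ξ.image (sR A) =
          insert (Form.atom i) (insert (Form.natom i) (Δ ∪ Ξ.image (sR A))) := by
        rw [Finset.insert_eq_self.mpr (Finset.mem_union_left _ hnat),
          Finset.insert_eq_self.mpr (Finset.mem_union_left _ hat)]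
      rw [e]; exact OmDerAux.ax _ _ i
  | orR c' Γ₀ A₂ B₂ hpre ihpre =>
      intro hc Δ Ξ hsplit hΞ hpos hcs
      have hsubΓ : Γ₀ ⊆ Δ ∪ Ξ.image (sT A) := by
        rw [← hsplit]; exact Finset.subset_insert _ _
      have hormem : Form.or A₂ B₂ ∈ Δ ∪ Ξ.image (sT A) := by
        rw [← hsplit]; exact Finset.mem_insert_self _ _
      rcases Finset.mem_union.mp hormem with hor | hor
      · have hstep := ihpre hc _ _ (splitIns2 hsubΓ A₂ B₂)
          (fun F hF => hΞ F (Finset.mem_of_mem_filter _ hF))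
          (pos_prem_or hpos) (cs_prem_or hcs)
        have hstep' := derW hstep (outIns2 A₂ B₂)
        rw [eq_ins_of_mem (Finset.mem_union_left _ hor)]
        exact OmDerAux.orR _ _ _ _ hstep'
      · obtain ⟨F, hF, hEq⟩ := Finset.mem_image.mp hor
        obtain ⟨hF0, hFV, hFlev⟩ := hΞ F hF
        obtain ⟨F₁, F₂, rfl, hA₂, hB₂⟩ := sT_eq_or hFV hEq
        obtain ⟨h01, h02⟩ : F₁.IsL0 ∧ F₂.IsL0 := hF0
        have hlv : F₁.lev ≤ A.lev ∧ F₂.lev ≤ A.lev := by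
          simp only [Form.lev, max_le_iff] at hFlev; exact hFlev
        subst hA₂; subst hB₂
        have hstep := ihpre hc _ _ (splitPair hsubΓ (selT A F₁) (selT A F₂))
          (by
            intro F' hF'
            rcases Finset.mem_union.mp hF' with hF' | hF'
            · rcases Finset.mem_union.mp hF' with hF' | hF'
              · obtain ⟨rfl, hfv⟩ := selX_mem hF'; exact ⟨h01, hfv, hlv.1⟩
              · obtain ⟨rfl, hfv⟩ := selX_mem hF'; exact ⟨h02, hfv, hlv.2⟩
            · exact hΞ F' (Finset.mem_of_mem_filter _ hF'))
          (pos_prem_or hpos) (cs_prem_or hcs)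
        have hstep' := derW hstep (selOutPair F₁ F₂)
        rw [Finset.insert_comm] at hstep'
        have h2 := hconv F₂ h02 hlv.2 _ hstep'
        rw [Finset.insert_comm] at h2
        have h1 := hconv F₁ h01 hlv.1 _ h2
        have hmemG : Form.or (sR A F₁) (sR A F₂) ∈ Δ ∪ Ξ.image (sR A) := by
          rw [← sR_or]
          exact Finset.mem_union_right _ (Finset.mem_image_of_mem _ hF)
        rw [eq_ins_of_mem hmemG]
        exact OmDerAux.orR _ _ _ _ h1
  | andR c' Γ₀ A₂ B₂ hd1 hd2 ih1 ih2 =>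
      intro hc Δ Ξ hsplit hΞ hpos hcs
      have hsubΓ : Γ₀ ⊆ Δ ∪ Ξ.image (sT A) := by
        rw [← hsplit]; exact Finset.subset_insert _ _
      have handmem : Form.and A₂ B₂ ∈ Δ ∪ Ξ.image (sT A) := by
        rw [← hsplit]; exact Finset.mem_insert_self _ _
      have hΞf : ∀ F ∈ Ξ.filter (fun F => sT A F ∈ Γ₀),
          F.IsL0 ∧ ¬F.ClosedF ∧ F.lev ≤ A.lev :=
        fun F hF => hΞ F (Finset.mem_of_mem_filter _ hF)
      rcases Finset.mem_union.mp handmem with hand | hand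
      · have hs1 := derW (ih1 hc _ _ (splitIns1 hsubΓ A₂) hΞf
          (pos_prem_and hpos).1 (cs_prem_and hcs).1) (outIns1 A₂)
        have hs2 := derW (ih2 hc _ _ (splitIns1 hsubΓ B₂) hΞf
          (pos_prem_and hpos).2 (cs_prem_and hcs).2) (outIns1 B₂)
        rw [eq_ins_of_mem (Finset.mem_union_left _ hand)]
        exact OmDerAux.andR _ _ _ _ hs1 hs2
      · obtain ⟨F, hF, hEq⟩ := Finset.mem_image.mp hand
        obtain ⟨hF0, hFV, hFlev⟩ := hΞ F hF
        obtain ⟨F₁, F₂, rfl, hA₂, hB₂⟩ := sT_eq_and hFV hEq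
        obtain ⟨h01, h02⟩ : F₁.IsL0 ∧ F₂.IsL0 := hF0
        have hlv : F₁.lev ≤ A.lev ∧ F₂.lev ≤ A.lev := by
          simp only [Form.lev, max_le_iff] at hFlev; exact hFlev
        subst hA₂; subst hB₂
        have hΞf1 : ∀ F' ∈ selX F₁ ∪ Ξ.filter (fun F => sT A F ∈ Γ₀),
            F'.IsL0 ∧ ¬F'.ClosedF ∧ F'.lev ≤ A.lev := by
          intro F' hF'
          rcases Finset.mem_union.mp hF' with hF' | hF'
          · obtain ⟨rfl, hfv⟩ := selX_mem hF'; exact ⟨h01, hfv, hlv.1⟩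
          · exact hΞ F' (Finset.mem_of_mem_filter _ hF')
        have hΞf2 : ∀ F' ∈ selX F₂ ∪ Ξ.filter (fun F => sT A F ∈ Γ₀),
            F'.IsL0 ∧ ¬F'.ClosedF ∧ F'.lev ≤ A.lev := by
          intro F' hF'
          rcases Finset.mem_union.mp hF' with hF' | hF'
          · obtain ⟨rfl, hfv⟩ := selX_mem hF'; exact ⟨h02, hfv, hlv.2⟩
          · exact hΞ F' (Finset.mem_of_mem_filter _ hF')
        have hs1 := hconv F₁ h01 hlv.1 _ (derW (ih1 hc _ _
          (splitOne hsubΓ (selT A F₁)) hΞf1 (pos_prem_and hpos).1 (cs_prem_and hcs).1)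
          (selOutOne F₁))
        have hs2 := hconv F₂ h02 hlv.2 _ (derW (ih2 hc _ _
          (splitOne hsubΓ (selT A F₂)) hΞf2 (pos_prem_and hpos).2 (cs_prem_and hcs).2)
          (selOutOne F₂))
        have hmemG : Form.and (sR A F₁) (sR A F₂) ∈ Δ ∪ Ξ.image (sR A) := by
          rw [← sR_and]
          exact Finset.mem_union_right _ (Finset.mem_image_of_mem _ hF)
        rw [eq_ins_of_mem hmemG]
        exact OmDerAux.andR _ _ _ _ hs1 hs2
  | clo c' Γ₀ B hpre ihpre =>
      intro hc Δ Ξ hsplit hΞ hpos hcs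
      have hsubΓ : Γ₀ ⊆ Δ ∪ Ξ.image (sT A) := by
        rw [← hsplit]; exact Finset.subset_insert _ _
      have hmumem : Form.mu B ∈ Δ ∪ Ξ.image (sT A) := by
        rw [← hsplit]; exact Finset.mem_insert_self _ _
      have hΞf : ∀ F ∈ Ξ.filter (fun F => sT A F ∈ Γ₀),
          F.IsL0 ∧ ¬F.ClosedF ∧ F.lev ≤ A.lev :=
        fun F hF => hΞ F (Finset.mem_of_mem_filter _ hF)
      rcases Finset.mem_union.mp hmumem with hmu | hmu
      · have hstep := derW (ihpre hc _ _ (splitIns1 hsubΓ _) hΞf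
          (pos_prem_clo hpos) (cs_prem_clo hcs)) (outIns1 _)
        rw [eq_ins_of_mem (Finset.mem_union_left _ hmu)]
        exact OmDerAux.clo _ _ _ hstep
      · obtain ⟨F, hF, hEq⟩ := Finset.mem_image.mp hmu
        obtain ⟨hF0, hFV, hFlev⟩ := hΞ F hF
        obtain ⟨rfl, rfl⟩ := sT_eq_mu hFV hEq
        -- F = var, B = prime A; the premise formula is sT A A
        have hprem : Form.subst (Form.prime A) (Form.mu (Form.prime A)) = sT A A := rfl
        have hmuG : Form.mu A ∈ Δ ∪ Ξ.image (sR A) :=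
          Finset.mem_union_right _ (Finset.mem_image.mpr ⟨Form.var, hF, rfl⟩)
        by_cases hclA : A.ClosedF
        · have hstep := derW (ihpre hc _ _ (by rw [hprem]; exact splitIns1 hsubΓ (sT A A))
            hΞf (pos_prem_clo hpos) (cs_prem_clo hcs)) (outIns1 (sT A A))
          rw [sT_closed hclA] at hstep
          have hstep2 := iddep A hA hclA (by rw [mMu]; omega) _ hstep
          rw [eq_ins_of_mem hmuG]
          refine OmDerAux.clo _ _ _ ?_
          rw [Form.subst_of_closed hclA]
          exact hstep2
        · have hstep := ihpre hc _ _
            (by rw [hprem]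
                exact splitOne hsubΓ (by simp : (∅ : Finset Form) ∪
                  ({A} : Finset Form).image (sT A) = {sT A A}))
            (by
              intro F' hF'
              rcases Finset.mem_union.mp hF' with hF' | hF'
              · rw [Finset.mem_singleton] at hF'; subst hF'
                exact ⟨hA, hclA, le_refl _⟩
              · exact hΞf F' hF')
            (pos_prem_clo hpos) (cs_prem_clo hcs)
          have hstep' : OmDerAux (prevOf (j+1)) (j+1) true
              (insert (sR A A) (Δ ∪ Ξ.image (sR A))) := by
            refine derW hstep ?_
            rw [Finset.image_union]
            intro x hx
            simp only [Finset.mem_union, Finset.empty_union] at hx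
            rcases hx with hx | hx | hx
            · exact Finset.mem_insert_of_mem
                (Finset.mem_union_left _ (Finset.mem_of_mem_inter_right hx))
            · simp only [Finset.image_singleton, Finset.mem_singleton] at hx
              rw [hx]; exact Finset.mem_insert_self _ _
            · exact Finset.mem_insert_of_mem (Finset.mem_union_right _
                (Finset.image_subset_image (Finset.filter_subset _ _) hx))
          rw [eq_ins_of_mem hmuG]
          exact OmDerAux.clo _ _ _ hstep'
  | nuR c' Γ₀ B hpre ihpre =>
      intro hc Δ Ξ hsplit hΞ hpos hcs
      have hsubΓ : Γ₀ ⊆ Δ ∪ Ξ.image (sT A) := by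
        rw [← hsplit]; exact Finset.subset_insert _ _
      have hnumem : Form.nu B ∈ Δ ∪ Ξ.image (sT A) := by
        rw [← hsplit]; exact Finset.mem_insert_self _ _
      have hnu : Form.nu B ∈ Δ := by
        rcases Finset.mem_union.mp hnumem with h | h
        · exact h
        · obtain ⟨F, hF, hEq⟩ := Finset.mem_image.mp h
          exact absurd hEq (sT_ne_nu (hΞ F hF).2.1)
      rw [eq_ins_of_mem (Finset.mem_union_left _ hnu)]
      refine OmDerAux.nuR _ _ _ (fun i => ?_)
      exact derW (ihpre i hc _ _ (splitIns1 hsubΓ _)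
        (fun F hF => hΞ F (Finset.mem_of_mem_filter _ hF))
        (pos_prem_nu hpos) (cs_prem_nu hcs)) (outIns1 _)
  | boxR c' Γ₀ S A₂ hpre ihpre =>
      intro hc Δ Ξ hsplit hΞ hpos hcs
      have hboxmem : Form.box A₂ ∈ Δ ∪ Ξ.image (sT A) := by
        rw [← hsplit]
        exact Finset.mem_union_right _ (Finset.mem_insert_self _ _)
      -- the "bodies" of the Ξ-members whose image is a dia-formula of Γ₀
      set ΞB := (Ξ.filter (fun F => sT A F ∈ Γ₀.image Form.dia)).image Form.undia with hΞB
      have hBmem : ∀ F₁ ∈ ΞB, Form.dia F₁ ∈ Ξ ∧ sT A F₁ ∈ Γ₀ := by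
        intro F₁ hF₁
        obtain ⟨F, hF, rfl⟩ := Finset.mem_image.mp hF₁
        have hFΞ := Finset.mem_filter.mp hF
        obtain ⟨C, hC, hEq⟩ := Finset.mem_image.mp hFΞ.2
        obtain ⟨F₁', rfl, hC'⟩ := sT_eq_dia (hΞ F hFΞ.1).2.1 hEq.symm
        rw [Form.undia]
        exact ⟨hFΞ.1, by rw [← hC']; exact hC⟩
      have hΞBfacts : ∀ F₁ ∈ ΞB, F₁.IsL0 ∧ ¬F₁.ClosedF ∧ F₁.lev ≤ A.lev := by
        intro F₁ hF₁
        have h := hΞ _ (hBmem F₁ hF₁).1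
        exact ⟨h.1, h.2.1, h.2.2⟩
      have hcovΓ : Γ₀ = Γ₀.filter (fun C => Form.dia C ∈ Δ) ∪ ΞB.image (sT A) := by
        ext x
        constructor
        · intro hx
          have hdx : Form.dia x ∈ Δ ∪ Ξ.image (sT A) := by
            rw [← hsplit]
            exact Finset.mem_union_left _ (Finset.mem_image_of_mem _ hx)
          rcases Finset.mem_union.mp hdx with hdx | hdx
          · exact Finset.mem_union_left _ (Finset.mem_filter.mpr ⟨hx, hdx⟩)
          · obtain ⟨F, hF, hEq⟩ := Finset.mem_image.mp hdx
            obtain ⟨F₁, rfl, hx'⟩ := sT_eq_dia (hΞ F hF).2.1 hEq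
            refine Finset.mem_union_right _ (Finset.mem_image.mpr ⟨F₁, ?_, hx'.symm⟩)
            refine Finset.mem_image.mpr ⟨Form.dia F₁, Finset.mem_filter.mpr ⟨hF, ?_⟩, ?_⟩
            · rw [sT_dia, ← hx']
              exact Finset.mem_image_of_mem _ hx
            · rw [Form.undia]
        · intro hx
          rcases Finset.mem_union.mp hx with hx | hx
          · exact Finset.mem_of_mem_filter _ hx
          · obtain ⟨F₁, hF₁, rfl⟩ := Finset.mem_image.mp hx
            exact (hBmem F₁ hF₁).2
      have hdiaSub : (Γ₀.filter (fun C => Form.dia C ∈ Δ) ∪ ΞB.image (sR A)).image Form.dia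
          ⊆ Δ ∪ Ξ.image (sR A) := by
        rw [Finset.image_union]
        refine Finset.union_subset ?_ ?_
        · intro x hx
          obtain ⟨C, hC, rfl⟩ := Finset.mem_image.mp hx
          exact Finset.mem_union_left _ (Finset.mem_filter.mp hC).2
        · intro x hx
          obtain ⟨y, hy, rfl⟩ := Finset.mem_image.mp hx
          obtain ⟨F₁, hF₁, rfl⟩ := Finset.mem_image.mp hy
          rw [← sR_dia]
          exact Finset.mem_union_right _ (Finset.mem_image_of_mem _ (hBmem F₁ hF₁).1)
      rcases Finset.mem_union.mp hboxmem with hbox | hbox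
      · have heq : insert A₂ Γ₀ =
            insert A₂ (Γ₀.filter (fun C => Form.dia C ∈ Δ)) ∪ ΞB.image (sT A) := by
          conv_lhs => rw [hcovΓ]
          rw [Finset.insert_union]
        have hstep := ihpre hc _ _ heq hΞBfacts (pos_prem_box hpos) (cs_prem_box hcs)
        rw [Finset.insert_union] at hstep
        have e : (Γ₀.filter (fun C => Form.dia C ∈ Δ) ∪ ΞB.image (sR A)).image Form.dia ∪
            insert (Form.box A₂) (Δ ∪ Ξ.image (sR A)) = Δ ∪ Ξ.image (sR A) := by
          rw [Finset.insert_eq_self.mpr (Finset.mem_union_left _ hbox),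
            Finset.union_eq_right.mpr hdiaSub]
        rw [← e]
        exact OmDerAux.boxR _ _ _ _ hstep
      · obtain ⟨F, hF, hEq⟩ := Finset.mem_image.mp hbox
        obtain ⟨hF0, hFV, hFlev⟩ := hΞ F hF
        obtain ⟨F₁, rfl, hA₂⟩ := sT_eq_box hFV hEq
        subst hA₂
        have heq : insert (sT A F₁) Γ₀ =
            Γ₀.filter (fun C => Form.dia C ∈ Δ) ∪ (insert F₁ ΞB).image (sT A) := by
          rw [Finset.image_insert, Finset.union_insert]
          conv_lhs => rw [hcovΓ]
        have hstep := ihpre hc _ _ heq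
          (by
            intro F' hF'
            rcases Finset.mem_insert.mp hF' with rfl | hF'
            · exact ⟨hF0, hFV, hFlev⟩
            · exact hΞBfacts F' hF')
          (pos_prem_box hpos) (cs_prem_box hcs)
        rw [Finset.image_insert, Finset.union_insert] at hstep
        have hboxG : Form.box (sR A F₁) ∈ Δ ∪ Ξ.image (sR A) := by
          rw [← sR_box]
          exact Finset.mem_union_right _ (Finset.mem_image_of_mem _ hF)
        have e : (Γ₀.filter (fun C => Form.dia C ∈ Δ) ∪ ΞB.image (sR A)).image Form.dia ∪
            insert (Form.box (sR A F₁)) (Δ ∪ Ξ.image (sR A)) = Δ ∪ Ξ.image (sR A) := by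
          rw [Finset.insert_eq_self.mpr hboxG, Finset.union_eq_right.mpr hdiaSub]
        rw [← e]
        exact OmDerAux.boxR _ _ _ _ hstep
  | cut Γ₀ B h1 h2 h3 hp1 hp2 ih1 ih2 =>
      intro hc; exact absurd hc (by simp)
  | omega c' Γ₀ B g hg1 hg2 hB hlev2 hprov ihprov =>
      intro hc Δ Ξ hsplit hΞ hpos hcs
      have hsubΓ : Γ₀ ⊆ Δ ∪ Ξ.image (sT A) := by
        rw [← hsplit]; exact Finset.subset_insert _ _
      have hXXmem : Form.prime (Form.compl (Form.mu B)) ∈ Δ ∪ Ξ.image (sT A) := by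
        rw [← hsplit]; exact Finset.mem_insert_self _ _
      have hXXΔ : Form.prime (Form.compl (Form.mu B)) ∈ Δ := by
        rcases Finset.mem_union.mp hXXmem with h | h
        · exact h
        · obtain ⟨F, hF, hEq⟩ := Finset.mem_image.mp h
          rw [primeComplMu] at hEq
          exact absurd hEq (sT_ne_nut (hΞ F hF).2.1)
      have hglt : g < (Form.mu A).lev := by
        have h1 := hpos _ (Finset.mem_insert_self _ _) (Form.prime (Form.compl B))
          (by rw [primeComplMu]; exact Or.inl rfl)
        rw [← primeComplMu, hlev2] at h1
        exact h1
      rw [eq_ins_of_mem (Finset.mem_union_left _ hXXΔ)]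
      refine OmDerAux.omega true _ B g hg1 (by omega) hB hlev2 ?_
      intro Δ₂ hcs2 hp2 hpre2
      rw [show prevOf (j+1) = OmProv j false from rfl, omProv_eq] at hpre2
      have hwit : prevOf j (insert (Form.prime (Form.mu B)) Δ₂) :=
        lowWit _ g hg1 hg2 (pos_insert_primeMu hlev2 (le_refl g) hp2)
          (closedSeq_insert (closedF_primeMu B) hcs2) hpre2
      have heq2 : Δ₂ ∪ Γ₀ = (Δ₂ ∪ Γ₀ ∩ Δ) ∪
          (Ξ.filter (fun F => sT A F ∈ Γ₀)).image (sT A) := by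
        conv_lhs => rw [coverSplit Δ Ξ (sT A) hsubΓ]
        rw [Finset.union_assoc]
      have hstep := ihprov Δ₂ hcs2 hp2 hwit hc _ _ heq2
        (fun F hF => hΞ F (Finset.mem_of_mem_filter _ hF))
        (positive_union (positive_le hp2 (by omega))
          (positive_mono hpos (Finset.subset_insert _ _)))
        (closedSeq_union hcs2 (closedSeq_mono hcs (Finset.subset_insert _ _)))
      exact derW hstep outUni
  | omegaT c' Γ₀ B g hg1 hg2 hB hlev2 hpre hprov ihpre ihprov =>
      intro hc Δ Ξ hsplit hΞ hpos hcs
      by_cases hgm : g < (Form.mu A).lev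
      · refine OmDerAux.omegaT true (Δ ∪ Ξ.image (sR A)) B g hg1 (by omega) hB hlev2 ?_ ?_
        · have heq1 : insert (Form.prime (Form.mu B)) Γ₀ =
              insert (Form.prime (Form.mu B)) Δ ∪ Ξ.image (sT A) := by
            rw [hsplit, Finset.insert_union]
          have hstep := ihpre hc _ _ heq1 hΞ
            (pos_insert_primeMu hlev2 (by omega) hpos)
            (closedSeq_insert (closedF_primeMu B) hcs)
          rwa [Finset.insert_union] at hstep
        · intro Δ₂ hcs2 hp2 hpre2
          rw [show prevOf (j+1) = OmProv j false from rfl, omProv_eq] at hpre2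
          have hwit : prevOf j (insert (Form.prime (Form.mu B)) Δ₂) :=
            lowWit _ g hg1 hg2 (pos_insert_primeMu hlev2 (le_refl g) hp2)
              (closedSeq_insert (closedF_primeMu B) hcs2) hpre2
          have heq2 : Δ₂ ∪ Γ₀ = (Δ₂ ∪ Δ) ∪ Ξ.image (sT A) := by
            rw [hsplit, Finset.union_assoc]
          have hstep := ihprov Δ₂ hcs2 hp2 hwit hc _ _ heq2 hΞ
            (positive_union (positive_le hp2 (by omega)) hpos)
            (closedSeq_union hcs2 hcs)
          rwa [Finset.union_assoc] at hstep
      · have hgm' : (Form.mu A).lev ≤ g := by omega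
        have hwit : prevOf j (insert (Form.prime (Form.mu B)) Γ₀) := by
          refine lowWit _ g hg1 hg2
            (pos_insert_primeMu hlev2 (le_refl g) (positive_le hpos hgm'))
            (closedSeq_insert (closedF_primeMu B) hcs) ?_
          rw [← hc]; exact hpre
        have hout := ihprov Γ₀ hcs (positive_le hpos hgm') hwit hc Δ Ξ
          (by rw [Finset.union_self]; exact hsplit) hΞ
          (by rw [Finset.union_self]; exact hpos)
          (by rw [Finset.union_self]; exact hcs)
        exact hout

lemma isL0_var : Form.var.IsL0 := by simp [Form.IsL0]
lemma not_closed_var : ¬Form.var.ClosedF := by simp [Form.ClosedF]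

lemma topPair {prev : Sequent → Prop} {k : ℕ} (c : Bool) (X : Sequent) :
    OmDerAux prev k c (insert Form.top (insert Form.top X)) := by
  rw [Finset.insert_idem]; exact topDer _ _

/-- Mixed identity `Σ, (¬μA)', μA` via the Ω-rule and the replacement lemma. -/
lemma mixedId {k : ℕ} {A : Form} (hA : A.IsL0) (hlev : (Form.mu A).lev ≤ k)
    (iddep : ∀ C : Form, C.IsL0 → C.ClosedF → C.lev < (Form.mu A).lev →
      ∀ X, OmDerAux (prevOf k) k true (insert (Form.prime C) X) →
        OmDerAux (prevOf k) k true (insert C X)) (X : Sequent) :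
    OmDerAux (prevOf k) k true
      (insert (Form.prime (Form.compl (Form.mu A))) (insert (Form.mu A) X)) := by
  cases k with
  | zero => rw [mMu] at hlev; omega
  | succ j =>
    refine OmDerAux.omega true _ A ((Form.mu A).lev) (by rw [mMu]; omega) hlev hA
      (by rw [lev_primeComplMu, mMu]) ?_
    intro Δ hcs hpos hpre
    rw [show prevOf (j+1) = OmProv j false from rfl, omProv_eq] at hpre
    have heq : insert (Form.prime (Form.mu A)) Δ =
        Δ ∪ ({Form.var} : Finset Form).image (sT A) := by
      rw [Finset.image_singleton, sT_var, Finset.union_comm, ← Finset.insert_eq]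
    have hrep := ureplN hA hlev iddep hpre rfl Δ {Form.var} heq
      (by
        intro F hF
        rw [Finset.mem_singleton] at hF
        subst hF
        exact ⟨isL0_var, not_closed_var, Nat.zero_le _⟩)
      (pos_insert_primeMu (by rw [lev_primeComplMu, mMu]) (le_refl _) hpos)
      (closedSeq_insert (closedF_primeMu A) hcs)
    refine derW hrep ?_
    intro x hx
    rcases Finset.mem_union.mp hx with hx | hx
    · exact Finset.mem_union_left _ hx
    · rw [Finset.image_singleton, sR_var, Finset.mem_singleton] at hx
      rw [hx]
      exact Finset.mem_union_right _ (Finset.mem_insert_self _ _)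

set_option maxHeartbeats 2000000 in
/-- Monotonicity / identity expansion: from the pair `{U, V}` to the pair
`{(¬F)'(U), F(V)}`. -/
lemma gen2 {k : ℕ} (F : Form) : F.IsL0 → F.lev ≤ k →
    (∀ C : Form, C.IsL0 → C.ClosedF → C.lev < F.lev →
      ∀ X, OmDerAux (prevOf k) k true (insert (Form.prime C) X) →
        OmDerAux (prevOf k) k true (insert C X)) →
    ∀ U V : Form, (∀ X : Sequent, OmDerAux (prevOf k) k true (insert U (insert V X))) →
    ∀ X : Sequent, OmDerAux (prevOf k) k true
      (insert (Form.subst (Form.prime (Form.compl F)) U) (insert (Form.subst F V) X)) := by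
  induction F with
  | atom i =>
      intro _ _ _ U V _ X
      show OmDerAux (prevOf k) k true (insert (Form.natom i) (insert (Form.atom i) X))
      rw [Finset.insert_comm]
      exact OmDerAux.ax _ _ i
  | natom i =>
      intro _ _ _ U V _ X
      exact OmDerAux.ax _ _ i
  | var =>
      intro _ _ _ U V hUV X
      exact hUV X
  | and F₁ F₂ ih₁ ih₂ =>
      intro hF hlev iddep U V hUV X
      have hl : F₁.lev ≤ k ∧ F₂.lev ≤ k := by
        simp only [Form.lev, max_le_iff] at hlev; exact ⟨hlev.1, hlev.2⟩
      have idd₁ : ∀ C : Form, C.IsL0 → C.ClosedF → C.lev < F₁.lev → ∀ X,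
          OmDerAux (prevOf k) k true (insert (Form.prime C) X) →
          OmDerAux (prevOf k) k true (insert C X) :=
        fun C a b hlt => iddep C a b
          (lt_of_lt_of_le hlt (le_max_left F₁.lev F₂.lev))
      have idd₂ : ∀ C : Form, C.IsL0 → C.ClosedF → C.lev < F₂.lev → ∀ X,
          OmDerAux (prevOf k) k true (insert (Form.prime C) X) →
          OmDerAux (prevOf k) k true (insert C X) :=
        fun C a b hlt => iddep C a b
          (lt_of_lt_of_le hlt (le_max_right F₁.lev F₂.lev))
      have p1 := derW (ih₁ hF.1 hl.1 idd₁ U V hUV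
          (insert (Form.subst (Form.prime (Form.compl F₂)) U) X))
        (show _ ⊆ insert (Form.subst F₁ V)
            (insert (Form.subst (Form.prime (Form.compl F₁)) U)
              (insert (Form.subst (Form.prime (Form.compl F₂)) U) X)) by
          intro x hx
          simp only [Finset.mem_insert] at hx ⊢
          tauto)
      have p2 := derW (ih₂ hF.2 hl.2 idd₂ U V hUV
          (insert (Form.subst (Form.prime (Form.compl F₁)) U) X))
        (show _ ⊆ insert (Form.subst F₂ V)
            (insert (Form.subst (Form.prime (Form.compl F₁)) U)
              (insert (Form.subst (Form.prime (Form.compl F₂)) U) X)) by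
          intro x hx
          simp only [Finset.mem_insert] at hx ⊢
          tauto)
      have band := OmDerAux.andR true _ _ _ p1 p2
      have bor := derW band
        (show _ ⊆ insert (Form.subst (Form.prime (Form.compl F₁)) U)
            (insert (Form.subst (Form.prime (Form.compl F₂)) U)
              (insert (Form.and (Form.subst F₁ V) (Form.subst F₂ V)) X)) by
          intro x hx
          simp only [Finset.mem_insert] at hx ⊢
          tauto)
      exact OmDerAux.orR _ _ _ _ bor
  | or F₁ F₂ ih₁ ih₂ =>
      intro hF hlev iddep U V hUV X
      have hl : F₁.lev ≤ k ∧ F₂.lev ≤ k := by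
        simp only [Form.lev, max_le_iff] at hlev; exact ⟨hlev.1, hlev.2⟩
      have idd₁ : ∀ C : Form, C.IsL0 → C.ClosedF → C.lev < F₁.lev → ∀ X,
          OmDerAux (prevOf k) k true (insert (Form.prime C) X) →
          OmDerAux (prevOf k) k true (insert C X) :=
        fun C a b hlt => iddep C a b
          (lt_of_lt_of_le hlt (le_max_left F₁.lev F₂.lev))
      have idd₂ : ∀ C : Form, C.IsL0 → C.ClosedF → C.lev < F₂.lev → ∀ X,
          OmDerAux (prevOf k) k true (insert (Form.prime C) X) →
          OmDerAux (prevOf k) k true (insert C X) :=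
        fun C a b hlt => iddep C a b
          (lt_of_lt_of_le hlt (le_max_right F₁.lev F₂.lev))
      have q1 := derW (ih₁ hF.1 hl.1 idd₁ U V hUV X)
        (show _ ⊆ insert (Form.subst F₁ V)
            (insert (Form.subst F₂ V)
              (insert (Form.subst (Form.prime (Form.compl F₁)) U) X)) by
          intro x hx
          simp only [Finset.mem_insert] at hx ⊢
          tauto)
      have q1' := derW (OmDerAux.orR true _ _ _ q1)
        (show _ ⊆ insert (Form.subst (Form.prime (Form.compl F₁)) U)
            (insert (Form.or (Form.subst F₁ V) (Form.subst F₂ V)) X) by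
          intro x hx
          simp only [Finset.mem_insert] at hx ⊢
          tauto)
      have q2 := derW (ih₂ hF.2 hl.2 idd₂ U V hUV X)
        (show _ ⊆ insert (Form.subst F₁ V)
            (insert (Form.subst F₂ V)
              (insert (Form.subst (Form.prime (Form.compl F₂)) U) X)) by
          intro x hx
          simp only [Finset.mem_insert] at hx ⊢
          tauto)
      have q2' := derW (OmDerAux.orR true _ _ _ q2)
        (show _ ⊆ insert (Form.subst (Form.prime (Form.compl F₂)) U)
            (insert (Form.or (Form.subst F₁ V) (Form.subst F₂ V)) X) by
          intro x hx
          simp only [Finset.mem_insert] at hx ⊢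
          tauto)
      exact OmDerAux.andR true _ _ _ q1' q2'
  | box F₁ ih =>
      intro hF hlev iddep U V hUV X
      have p := ih hF hlev iddep U V hUV ∅
      rw [Finset.insert_comm] at p
      have b := OmDerAux.boxR true {Form.subst (Form.prime (Form.compl F₁)) U} X
        (Form.subst F₁ V) p
      rwa [Finset.image_singleton, ← Finset.insert_eq] at b
  | dia F₁ ih =>
      intro hF hlev iddep U V hUV X
      have p := ih hF hlev iddep U V hUV ∅
      have b := OmDerAux.boxR true {Form.subst F₁ V} X
        (Form.subst (Form.prime (Form.compl F₁)) U) p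
      rw [Finset.image_singleton, ← Finset.insert_eq] at b
      show OmDerAux (prevOf k) k true
        (insert (Form.box (Form.subst (Form.prime (Form.compl F₁)) U))
          (insert (Form.dia (Form.subst F₁ V)) X))
      rw [Finset.insert_comm]
      exact b
  | mu F₁ ih =>
      intro hF hlev iddep U V hUV X
      exact mixedId (A := F₁) hF hlev iddep X
  | nu F₁ ih =>
      intro hF hlev iddep U V hUV X
      have hl₁ : F₁.lev ≤ k := by
        have : F₁.lev + 1 ≤ k := by simpa [Form.lev] using hlev
        omega
      have idd₁ : ∀ C : Form, C.IsL0 → C.ClosedF → C.lev < F₁.lev → ∀ X,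
          OmDerAux (prevOf k) k true (insert (Form.prime C) X) →
          OmDerAux (prevOf k) k true (insert C X) :=
        fun C a b hlt => iddep C a b (by simp only [Form.lev]; omega)
      have loop : ∀ i : ℕ, ∀ Y : Sequent, OmDerAux (prevOf k) k true
          (insert (Form.mu (Form.prime (Form.compl F₁))) (insert (Form.iter F₁ i) Y)) := by
        intro i
        induction i with
        | zero =>
            intro Y
            have := topDer (prev := prevOf k) (k := k) true
              (insert (Form.mu (Form.prime (Form.compl F₁))) Y)
            exact derW this (by
              intro x hx
              simp only [Finset.mem_insert] at hx ⊢
              rcases hx with rfl | hx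
              · exact Or.inr (Or.inl rfl)
              · tauto)
        | succ i ihi =>
            intro Y
            have hstep := ih hF hl₁ idd₁ (Form.mu (Form.prime (Form.compl F₁)))
              (Form.iter F₁ i) ihi Y
            have e : Form.subst F₁ (Form.iter F₁ i) = Form.iter F₁ (i+1) := rfl
            rw [e] at hstep
            exact OmDerAux.clo true _ _ hstep
      have hnu := OmDerAux.nuR true
        (insert (Form.mu (Form.prime (Form.compl F₁))) X) F₁
        (fun i => by
          have := loop i X
          rw [Finset.insert_comm] at this
          exact this)
      show OmDerAux (prevOf k) k true
        (insert (Form.mu (Form.prime (Form.compl F₁))) (insert (Form.nu F₁) X))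
      rw [Finset.insert_comm]
      exact hnu
  | nut F₁ ih =>
      intro hF
      exact absurd hF (by simp [Form.IsL0])

/-- `ID2`: the mixed identity `Σ, (¬C)', C` for `L0` formulas of level `≤ k`. -/
lemma id2 {k : ℕ} : ∀ (n : ℕ) (C : Form), C.IsL0 → C.ClosedF → C.lev ≤ k → C.lev ≤ n →
    ∀ X : Sequent, OmDerAux (prevOf k) k true
      (insert (Form.prime (Form.compl C)) (insert C X)) := by
  intro n
  induction n with
  | zero =>
      intro C h1 h2 hlevk hlevn X
      have hg := gen2 C h1 hlevk
        (fun C' _ _ hlt => absurd hlt (by omega)) Form.top Form.top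
        (fun X => topPair true X) X
      rwa [Form.subst_of_closed (Form.closedF_prime (Form.closedF_compl h2)),
        Form.subst_of_closed h2] at hg
  | succ n ihn =>
      intro C h1 h2 hlevk hlevn X
      have hg := gen2 C h1 hlevk
        (fun C' h1' h2' hlt X' hd => by
          refine OmDerAux.cut (insert C' X') C' h1' h2' (by omega) ?_ ?_
          · exact derW hd (Finset.insert_subset_insert _ (Finset.subset_insert _ _))
          · exact ihn C' h1' h2' (by omega) (by omega) X')
        Form.top Form.top (fun X => topPair true X) X
      rwa [Form.subst_of_closed (Form.closedF_prime (Form.closedF_compl h2)),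
        Form.subst_of_closed h2] at hg

/-- Depriming: `Σ, C'` derivable implies `Σ, C` derivable, for `L0` formulas of
level `≤ k`. -/
lemma deprime {k : ℕ} {C : Form} (h1 : C.IsL0) (h2 : C.ClosedF) (hlev : C.lev ≤ k)
    {X : Sequent} (hd : OmDerAux (prevOf k) k true (insert (Form.prime C) X)) :
    OmDerAux (prevOf k) k true (insert C X) := by
  refine OmDerAux.cut (insert C X) C h1 h2 hlev ?_ ?_
  · exact derW hd (Finset.insert_subset_insert _ (Finset.subset_insert _ _))
  · exact id2 C.lev C h1 h2 hlev (le_refl _) X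

/-- Replacement lemma for the induction rule: `(μA)'` is replaced by `B'`. -/
lemma ureplB {j : ℕ} {A B : Form} (hA : A.IsL0) (hlevA : (Form.mu A).lev ≤ j + 1)
    (hDL0 : (Form.subst A B).IsL0) (hDcl : (Form.subst A B).ClosedF)
    (hDlev : (Form.subst A B).lev ≤ j + 1)
    (Hind : ∀ X : Sequent, OmDerAux (prevOf (j+1)) (j+1) true
      (insert (Form.prime (Form.compl (Form.subst A B))) (insert (Form.prime B) X)))
    {c : Bool} {Θ : Sequent} (d : OmDerAux (prevOf j) j c Θ) :
    c = false → ∀ (Δ Ξ : Finset Form), Θ = Δ ∪ Ξ.image (sT A) →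
    (∀ F ∈ Ξ, F.IsL0 ∧ ¬F.ClosedF ∧ F.lev ≤ A.lev) →
    Positive (Form.mu A).lev Θ → ClosedSeq Θ →
    OmDerAux (prevOf (j+1)) (j+1) true (Δ ∪ Ξ.image (sB B)) := by
  have lowWit : ∀ (Θ' : Sequent) (g : ℕ), 1 ≤ g → g ≤ j → Positive g Θ' → ClosedSeq Θ' →
      OmDerAux (prevOf j) j false Θ' → prevOf j Θ' := by
    intro Θ' g hg1 hgj hp hcs hd
    cases j with
    | zero => omega
    | succ n =>
        rw [show prevOf (n+1) = OmProv n false from rfl, omProv_eq]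
        exact (liftlow n).2 false Θ' hd rfl g hgj hp hcs
  induction d with
  | ax c' Γ₀ i =>
      intro hc Δ Ξ hsplit hΞ hpos hcs
      have hat : Form.atom i ∈ Δ := by
        have hx : Form.atom i ∈ Δ ∪ Ξ.image (sT A) := by rw [← hsplit]; simp
        rcases Finset.mem_union.mp hx with hx | hx
        · exact hx
        · obtain ⟨F, hF, hEq⟩ := Finset.mem_image.mp hx
          exact absurd hEq (sT_ne_atom (hΞ F hF).2.1 i)
      have hnat : Form.natom i ∈ Δ := by
        have hx : Form.natom i ∈ Δ ∪ Ξ.image (sT A) := by rw [← hsplit]; simp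
        rcases Finset.mem_union.mp hx with hx | hx
        · exact hx
        · obtain ⟨F, hF, hEq⟩ := Finset.mem_image.mp hx
          exact absurd hEq (sT_ne_natom (hΞ F hF).2.1 i)
      have e : Δ ∪ Ξ.image (sB B) =
          insert (Form.atom i) (insert (Form.natom i) (Δ ∪ Ξ.image (sB B))) := by
        rw [Finset.insert_eq_self.mpr (Finset.mem_union_left _ hnat),
          Finset.insert_eq_self.mpr (Finset.mem_union_left _ hat)]
      rw [e]; exact OmDerAux.ax _ _ i
  | orR c' Γ₀ A₂ B₂ hpre ihpre =>
      intro hc Δ Ξ hsplit hΞ hpos hcs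
      have hsubΓ : Γ₀ ⊆ Δ ∪ Ξ.image (sT A) := by
        rw [← hsplit]; exact Finset.subset_insert _ _
      have hormem : Form.or A₂ B₂ ∈ Δ ∪ Ξ.image (sT A) := by
        rw [← hsplit]; exact Finset.mem_insert_self _ _
      rcases Finset.mem_union.mp hormem with hor | hor
      · have hstep := ihpre hc _ _ (splitIns2 hsubΓ A₂ B₂)
          (fun F hF => hΞ F (Finset.mem_of_mem_filter _ hF))
          (pos_prem_or hpos) (cs_prem_or hcs)
        have hstep' := derW hstep (outIns2 A₂ B₂)
        rw [eq_ins_of_mem (Finset.mem_union_left _ hor)]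
        exact OmDerAux.orR _ _ _ _ hstep'
      · obtain ⟨F, hF, hEq⟩ := Finset.mem_image.mp hor
        obtain ⟨hF0, hFV, hFlev⟩ := hΞ F hF
        obtain ⟨F₁, F₂, rfl, hA₂, hB₂⟩ := sT_eq_or hFV hEq
        obtain ⟨h01, h02⟩ : F₁.IsL0 ∧ F₂.IsL0 := hF0
        have hlv : F₁.lev ≤ A.lev ∧ F₂.lev ≤ A.lev := by
          simp only [Form.lev, max_le_iff] at hFlev; exact hFlev
        subst hA₂; subst hB₂
        have hstep := ihpre hc _ _ (splitPair hsubΓ (selT A F₁) (selT A F₂))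
          (by
            intro F' hF'
            rcases Finset.mem_union.mp hF' with hF' | hF'
            · rcases Finset.mem_union.mp hF' with hF' | hF'
              · obtain ⟨rfl, hfv⟩ := selX_mem hF'; exact ⟨h01, hfv, hlv.1⟩
              · obtain ⟨rfl, hfv⟩ := selX_mem hF'; exact ⟨h02, hfv, hlv.2⟩
            · exact hΞ F' (Finset.mem_of_mem_filter _ hF'))
          (pos_prem_or hpos) (cs_prem_or hcs)
        have h1 := derW hstep (selOutPairG F₁ F₂ (selRB A B F₁) (selRB A B F₂))
        have hmemG : Form.or (sB B F₁) (sB B F₂) ∈ Δ ∪ Ξ.image (sB B) := by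
          rw [← sB_or]
          exact Finset.mem_union_right _ (Finset.mem_image_of_mem _ hF)
        rw [eq_ins_of_mem hmemG]
        exact OmDerAux.orR _ _ _ _ h1
  | andR c' Γ₀ A₂ B₂ hd1 hd2 ih1 ih2 =>
      intro hc Δ Ξ hsplit hΞ hpos hcs
      have hsubΓ : Γ₀ ⊆ Δ ∪ Ξ.image (sT A) := by
        rw [← hsplit]; exact Finset.subset_insert _ _
      have handmem : Form.and A₂ B₂ ∈ Δ ∪ Ξ.image (sT A) := by
        rw [← hsplit]; exact Finset.mem_insert_self _ _
      have hΞf : ∀ F ∈ Ξ.filter (fun F => sT A F ∈ Γ₀),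
          F.IsL0 ∧ ¬F.ClosedF ∧ F.lev ≤ A.lev :=
        fun F hF => hΞ F (Finset.mem_of_mem_filter _ hF)
      rcases Finset.mem_union.mp handmem with hand | hand
      · have hs1 := derW (ih1 hc _ _ (splitIns1 hsubΓ A₂) hΞf
          (pos_prem_and hpos).1 (cs_prem_and hcs).1) (outIns1 A₂)
        have hs2 := derW (ih2 hc _ _ (splitIns1 hsubΓ B₂) hΞf
          (pos_prem_and hpos).2 (cs_prem_and hcs).2) (outIns1 B₂)
        rw [eq_ins_of_mem (Finset.mem_union_left _ hand)]
        exact OmDerAux.andR _ _ _ _ hs1 hs2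
      · obtain ⟨F, hF, hEq⟩ := Finset.mem_image.mp hand
        obtain ⟨hF0, hFV, hFlev⟩ := hΞ F hF
        obtain ⟨F₁, F₂, rfl, hA₂, hB₂⟩ := sT_eq_and hFV hEq
        obtain ⟨h01, h02⟩ : F₁.IsL0 ∧ F₂.IsL0 := hF0
        have hlv : F₁.lev ≤ A.lev ∧ F₂.lev ≤ A.lev := by
          simp only [Form.lev, max_le_iff] at hFlev; exact hFlev
        subst hA₂; subst hB₂
        have hΞf1 : ∀ F' ∈ selX F₁ ∪ Ξ.filter (fun F => sT A F ∈ Γ₀),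
            F'.IsL0 ∧ ¬F'.ClosedF ∧ F'.lev ≤ A.lev := by
          intro F' hF'
          rcases Finset.mem_union.mp hF' with hF' | hF'
          · obtain ⟨rfl, hfv⟩ := selX_mem hF'; exact ⟨h01, hfv, hlv.1⟩
          · exact hΞ F' (Finset.mem_of_mem_filter _ hF')
        have hΞf2 : ∀ F' ∈ selX F₂ ∪ Ξ.filter (fun F => sT A F ∈ Γ₀),
            F'.IsL0 ∧ ¬F'.ClosedF ∧ F'.lev ≤ A.lev := by
          intro F' hF'
          rcases Finset.mem_union.mp hF' with hF' | hF'
          · obtain ⟨rfl, hfv⟩ := selX_mem hF'; exact ⟨h02, hfv, hlv.2⟩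
          · exact hΞ F' (Finset.mem_of_mem_filter _ hF')
        have hs1 := derW (ih1 hc _ _
          (splitOne hsubΓ (selT A F₁)) hΞf1 (pos_prem_and hpos).1 (cs_prem_and hcs).1)
          (selOutOneG F₁ (selRB A B F₁))
        have hs2 := derW (ih2 hc _ _
          (splitOne hsubΓ (selT A F₂)) hΞf2 (pos_prem_and hpos).2 (cs_prem_and hcs).2)
          (selOutOneG F₂ (selRB A B F₂))
        have hmemG : Form.and (sB B F₁) (sB B F₂) ∈ Δ ∪ Ξ.image (sB B) := by
          rw [← sB_and]
          exact Finset.mem_union_right _ (Finset.mem_image_of_mem _ hF)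
        rw [eq_ins_of_mem hmemG]
        exact OmDerAux.andR _ _ _ _ hs1 hs2
  | clo c' Γ₀ B0 hpre ihpre =>
      intro hc Δ Ξ hsplit hΞ hpos hcs
      have hsubΓ : Γ₀ ⊆ Δ ∪ Ξ.image (sT A) := by
        rw [← hsplit]; exact Finset.subset_insert _ _
      have hmumem : Form.mu B0 ∈ Δ ∪ Ξ.image (sT A) := by
        rw [← hsplit]; exact Finset.mem_insert_self _ _
      have hΞf : ∀ F ∈ Ξ.filter (fun F => sT A F ∈ Γ₀),
          F.IsL0 ∧ ¬F.ClosedF ∧ F.lev ≤ A.lev :=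
        fun F hF => hΞ F (Finset.mem_of_mem_filter _ hF)
      rcases Finset.mem_union.mp hmumem with hmu | hmu
      · have hstep := derW (ihpre hc _ _ (splitIns1 hsubΓ _) hΞf
          (pos_prem_clo hpos) (cs_prem_clo hcs)) (outIns1 _)
        rw [eq_ins_of_mem (Finset.mem_union_left _ hmu)]
        exact OmDerAux.clo _ _ _ hstep
      · obtain ⟨F, hF, hEq⟩ := Finset.mem_image.mp hmu
        obtain ⟨hF0, hFV, hFlev⟩ := hΞ F hF
        obtain ⟨rfl, rfl⟩ := sT_eq_mu hFV hEq
        -- F = var, the fixed point is unfolded; use the cut with Hind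
        have hprem : Form.subst (Form.prime A) (Form.mu (Form.prime A)) = sT A A := rfl
        have hB'G : Form.prime B ∈ Δ ∪ Ξ.image (sB B) :=
          Finset.mem_union_right _ (Finset.mem_image.mpr ⟨Form.var, hF, rfl⟩)
        have hstep := derW (ihpre hc _ _ (by rw [hprem]; exact splitOne hsubΓ (selT A A))
          (by
            intro F' hF'
            rcases Finset.mem_union.mp hF' with hF' | hF'
            · obtain ⟨rfl, hfv⟩ := selX_mem hF'
              exact ⟨hA, hfv, le_refl _⟩
            · exact hΞf F' hF')
          (pos_prem_clo hpos) (cs_prem_clo hcs)) (selOutOneG A (selRB A B A))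
        -- hstep : Der (insert (sB B A) G), and sB B A = prime (subst A B)
        refine OmDerAux.cut _ (Form.subst A B) hDL0 hDcl hDlev ?_ ?_
        · exact hstep
        · have hH := Hind (Δ ∪ Ξ.image (sB B))
          rwa [Finset.insert_eq_self.mpr hB'G] at hH
  | nuR c' Γ₀ B0 hpre ihpre =>
      intro hc Δ Ξ hsplit hΞ hpos hcs
      have hsubΓ : Γ₀ ⊆ Δ ∪ Ξ.image (sT A) := by
        rw [← hsplit]; exact Finset.subset_insert _ _
      have hnumem : Form.nu B0 ∈ Δ ∪ Ξ.image (sT A) := by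
        rw [← hsplit]; exact Finset.mem_insert_self _ _
      have hnu : Form.nu B0 ∈ Δ := by
        rcases Finset.mem_union.mp hnumem with h | h
        · exact h
        · obtain ⟨F, hF, hEq⟩ := Finset.mem_image.mp h
          exact absurd hEq (sT_ne_nu (hΞ F hF).2.1)
      rw [eq_ins_of_mem (Finset.mem_union_left _ hnu)]
      refine OmDerAux.nuR _ _ _ (fun i => ?_)
      exact derW (ihpre i hc _ _ (splitIns1 hsubΓ _)
        (fun F hF => hΞ F (Finset.mem_of_mem_filter _ hF))
        (pos_prem_nu hpos) (cs_prem_nu hcs)) (outIns1 _)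
  | boxR c' Γ₀ S A₂ hpre ihpre =>
      intro hc Δ Ξ hsplit hΞ hpos hcs
      have hboxmem : Form.box A₂ ∈ Δ ∪ Ξ.image (sT A) := by
        rw [← hsplit]
        exact Finset.mem_union_right _ (Finset.mem_insert_self _ _)
      -- the "bodies" of the Ξ-members whose image is a dia-formula of Γ₀
      set ΞB := (Ξ.filter (fun F => sT A F ∈ Γ₀.image Form.dia)).image Form.undia with hΞB
      have hBmem : ∀ F₁ ∈ ΞB, Form.dia F₁ ∈ Ξ ∧ sT A F₁ ∈ Γ₀ := by
        intro F₁ hF₁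
        obtain ⟨F, hF, rfl⟩ := Finset.mem_image.mp hF₁
        have hFΞ := Finset.mem_filter.mp hF
        obtain ⟨C, hC, hEq⟩ := Finset.mem_image.mp hFΞ.2
        obtain ⟨F₁', rfl, hC'⟩ := sT_eq_dia (hΞ F hFΞ.1).2.1 hEq.symm
        rw [Form.undia]
        exact ⟨hFΞ.1, by rw [← hC']; exact hC⟩
      have hΞBfacts : ∀ F₁ ∈ ΞB, F₁.IsL0 ∧ ¬F₁.ClosedF ∧ F₁.lev ≤ A.lev := by
        intro F₁ hF₁
        have h := hΞ _ (hBmem F₁ hF₁).1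
        exact ⟨h.1, h.2.1, h.2.2⟩
      have hcovΓ : Γ₀ = Γ₀.filter (fun C => Form.dia C ∈ Δ) ∪ ΞB.image (sT A) := by
        ext x
        constructor
        · intro hx
          have hdx : Form.dia x ∈ Δ ∪ Ξ.image (sT A) := by
            rw [← hsplit]
            exact Finset.mem_union_left _ (Finset.mem_image_of_mem _ hx)
          rcases Finset.mem_union.mp hdx with hdx | hdx
          · exact Finset.mem_union_left _ (Finset.mem_filter.mpr ⟨hx, hdx⟩)
          · obtain ⟨F, hF, hEq⟩ := Finset.mem_image.mp hdx
            obtain ⟨F₁, rfl, hx'⟩ := sT_eq_dia (hΞ F hF).2.1 hEq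
            refine Finset.mem_union_right _ (Finset.mem_image.mpr ⟨F₁, ?_, hx'.symm⟩)
            refine Finset.mem_image.mpr ⟨Form.dia F₁, Finset.mem_filter.mpr ⟨hF, ?_⟩, ?_⟩
            · rw [sT_dia, ← hx']
              exact Finset.mem_image_of_mem _ hx
            · rw [Form.undia]
        · intro hx
          rcases Finset.mem_union.mp hx with hx | hx
          · exact Finset.mem_of_mem_filter _ hx
          · obtain ⟨F₁, hF₁, rfl⟩ := Finset.mem_image.mp hx
            exact (hBmem F₁ hF₁).2
      have hdiaSub : (Γ₀.filter (fun C => Form.dia C ∈ Δ) ∪ ΞB.image (sB B)).image Form.dia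
          ⊆ Δ ∪ Ξ.image (sB B) := by
        rw [Finset.image_union]
        refine Finset.union_subset ?_ ?_
        · intro x hx
          obtain ⟨C, hC, rfl⟩ := Finset.mem_image.mp hx
          exact Finset.mem_union_left _ (Finset.mem_filter.mp hC).2
        · intro x hx
          obtain ⟨y, hy, rfl⟩ := Finset.mem_image.mp hx
          obtain ⟨F₁, hF₁, rfl⟩ := Finset.mem_image.mp hy
          rw [← sB_dia]
          exact Finset.mem_union_right _ (Finset.mem_image_of_mem _ (hBmem F₁ hF₁).1)
      rcases Finset.mem_union.mp hboxmem with hbox | hbox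
      · have heq : insert A₂ Γ₀ =
            insert A₂ (Γ₀.filter (fun C => Form.dia C ∈ Δ)) ∪ ΞB.image (sT A) := by
          conv_lhs => rw [hcovΓ]
          rw [Finset.insert_union]
        have hstep := ihpre hc _ _ heq hΞBfacts (pos_prem_box hpos) (cs_prem_box hcs)
        rw [Finset.insert_union] at hstep
        have e : (Γ₀.filter (fun C => Form.dia C ∈ Δ) ∪ ΞB.image (sB B)).image Form.dia ∪
            insert (Form.box A₂) (Δ ∪ Ξ.image (sB B)) = Δ ∪ Ξ.image (sB B) := by
          rw [Finset.insert_eq_self.mpr (Finset.mem_union_left _ hbox),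
            Finset.union_eq_right.mpr hdiaSub]
        rw [← e]
        exact OmDerAux.boxR _ _ _ _ hstep
      · obtain ⟨F, hF, hEq⟩ := Finset.mem_image.mp hbox
        obtain ⟨hF0, hFV, hFlev⟩ := hΞ F hF
        obtain ⟨F₁, rfl, hA₂⟩ := sT_eq_box hFV hEq
        subst hA₂
        have heq : insert (sT A F₁) Γ₀ =
            Γ₀.filter (fun C => Form.dia C ∈ Δ) ∪ (insert F₁ ΞB).image (sT A) := by
          rw [Finset.image_insert, Finset.union_insert]
          conv_lhs => rw [hcovΓ]
        have hstep := ihpre hc _ _ heq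
          (by
            intro F' hF'
            rcases Finset.mem_insert.mp hF' with rfl | hF'
            · exact ⟨hF0, hFV, hFlev⟩
            · exact hΞBfacts F' hF')
          (pos_prem_box hpos) (cs_prem_box hcs)
        rw [Finset.image_insert, Finset.union_insert] at hstep
        have hboxG : Form.box (sB B F₁) ∈ Δ ∪ Ξ.image (sB B) := by
          rw [← sB_box]
          exact Finset.mem_union_right _ (Finset.mem_image_of_mem _ hF)
        have e : (Γ₀.filter (fun C => Form.dia C ∈ Δ) ∪ ΞB.image (sB B)).image Form.dia ∪
            insert (Form.box (sB B F₁)) (Δ ∪ Ξ.image (sB B)) = Δ ∪ Ξ.image (sB B) := by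
          rw [Finset.insert_eq_self.mpr hboxG, Finset.union_eq_right.mpr hdiaSub]
        rw [← e]
        exact OmDerAux.boxR _ _ _ _ hstep
  | cut Γ₀ B h1 h2 h3 hp1 hp2 ih1 ih2 =>
      intro hc; exact absurd hc (by simp)
  | omega c' Γ₀ B0 g hg1 hg2 hB hlev2 hprov ihprov =>
      intro hc Δ Ξ hsplit hΞ hpos hcs
      have hsubΓ : Γ₀ ⊆ Δ ∪ Ξ.image (sT A) := by
        rw [← hsplit]; exact Finset.subset_insert _ _
      have hXXmem : Form.prime (Form.compl (Form.mu B0)) ∈ Δ ∪ Ξ.image (sT A) := by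
        rw [← hsplit]; exact Finset.mem_insert_self _ _
      have hXXΔ : Form.prime (Form.compl (Form.mu B0)) ∈ Δ := by
        rcases Finset.mem_union.mp hXXmem with h | h
        · exact h
        · obtain ⟨F, hF, hEq⟩ := Finset.mem_image.mp h
          rw [primeComplMu] at hEq
          exact absurd hEq (sT_ne_nut (hΞ F hF).2.1)
      have hglt : g < (Form.mu A).lev := by
        have h1 := hpos _ (Finset.mem_insert_self _ _) (Form.prime (Form.compl B0))
          (by rw [primeComplMu]; exact Or.inl rfl)
        rw [← primeComplMu, hlev2] at h1
        exact h1
      rw [eq_ins_of_mem (Finset.mem_union_left _ hXXΔ)]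
      refine OmDerAux.omega true _ B0 g hg1 (by omega) hB hlev2 ?_
      intro Δ₂ hcs2 hp2 hpre2
      rw [show prevOf (j+1) = OmProv j false from rfl, omProv_eq] at hpre2
      have hwit : prevOf j (insert (Form.prime (Form.mu B0)) Δ₂) :=
        lowWit _ g hg1 hg2 (pos_insert_primeMu hlev2 (le_refl g) hp2)
          (closedSeq_insert (closedF_primeMu B0) hcs2) hpre2
      have heq2 : Δ₂ ∪ Γ₀ = (Δ₂ ∪ Γ₀ ∩ Δ) ∪
          (Ξ.filter (fun F => sT A F ∈ Γ₀)).image (sT A) := by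
        conv_lhs => rw [coverSplit Δ Ξ (sT A) hsubΓ]
        rw [Finset.union_assoc]
      have hstep := ihprov Δ₂ hcs2 hp2 hwit hc _ _ heq2
        (fun F hF => hΞ F (Finset.mem_of_mem_filter _ hF))
        (positive_union (positive_le hp2 (by omega))
          (positive_mono hpos (Finset.subset_insert _ _)))
        (closedSeq_union hcs2 (closedSeq_mono hcs (Finset.subset_insert _ _)))
      exact derW hstep outUni
  | omegaT c' Γ₀ B0 g hg1 hg2 hB hlev2 hpre hprov ihpre ihprov =>
      intro hc Δ Ξ hsplit hΞ hpos hcs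
      by_cases hgm : g < (Form.mu A).lev
      · refine OmDerAux.omegaT true (Δ ∪ Ξ.image (sB B)) B0 g hg1 (by omega) hB hlev2 ?_ ?_
        · have heq1 : insert (Form.prime (Form.mu B0)) Γ₀ =
              insert (Form.prime (Form.mu B0)) Δ ∪ Ξ.image (sT A) := by
            rw [hsplit, Finset.insert_union]
          have hstep := ihpre hc _ _ heq1 hΞ
            (pos_insert_primeMu hlev2 (by omega) hpos)
            (closedSeq_insert (closedF_primeMu B0) hcs)
          rwa [Finset.insert_union] at hstep
        · intro Δ₂ hcs2 hp2 hpre2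
          rw [show prevOf (j+1) = OmProv j false from rfl, omProv_eq] at hpre2
          have hwit : prevOf j (insert (Form.prime (Form.mu B0)) Δ₂) :=
            lowWit _ g hg1 hg2 (pos_insert_primeMu hlev2 (le_refl g) hp2)
              (closedSeq_insert (closedF_primeMu B0) hcs2) hpre2
          have heq2 : Δ₂ ∪ Γ₀ = (Δ₂ ∪ Δ) ∪ Ξ.image (sT A) := by
            rw [hsplit, Finset.union_assoc]
          have hstep := ihprov Δ₂ hcs2 hp2 hwit hc _ _ heq2 hΞ
            (positive_union (positive_le hp2 (by omega)) hpos)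
            (closedSeq_union hcs2 hcs)
          rwa [Finset.union_assoc] at hstep
      · have hgm' : (Form.mu A).lev ≤ g := by omega
        have hwit : prevOf j (insert (Form.prime (Form.mu B0)) Γ₀) := by
          refine lowWit _ g hg1 hg2
            (pos_insert_primeMu hlev2 (le_refl g) (positive_le hpos hgm'))
            (closedSeq_insert (closedF_primeMu B0) hcs) ?_
          rw [← hc]; exact hpre
        have hout := ihprov Γ₀ hcs (positive_le hpos hgm') hwit hc Δ Ξ
          (by rw [Finset.union_self]; exact hsplit) hΞ
          (by rw [Finset.union_self]; exact hpos)
          (by rw [Finset.union_self]; exact hcs)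
        exact hout

lemma levOfMDerB {k : ℕ} {Γ : Sequent} (h : MDerB k Γ) : SeqLevLE k Γ := by
  cases h with
  | ax _ _ hl => exact hl
  | axMu _ _ hl => exact hl
  | orR _ _ _ hl _ => exact hl
  | andR _ _ _ hl _ _ => exact hl
  | boxR _ _ _ hl _ => exact hl
  | clo _ _ hl _ => exact hl
  | ind _ _ hl _ => exact hl
  | cut _ _ _ _ hl _ _ => exact hl

/-- The main embedding: an `M`-derivation of level `≤ k` of an `L0` sequent yields
an `M^Ω_k` derivation of its primed version. -/
lemma mainEmb {k : ℕ} {Γ : Sequent} (hd : MDerB k Γ) : L0Seq Γ →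
    OmDerAux (prevOf k) k true (Γ.image Form.prime) := by
  induction hd with
  | ax Γ₀ i hl =>
      intro hL
      rw [Finset.image_insert, Finset.image_insert]
      exact OmDerAux.ax _ _ i
  | axMu Γ₀ A hl =>
      intro hL
      have hA : A.IsL0 := (hL _ (Finset.mem_insert_self _ _)).1
      have hlev : (Form.mu A).lev ≤ k := hl _ (Finset.mem_insert_self _ _)
      rw [Finset.image_insert, Finset.image_insert]
      exact pident hA hlev _
  | orR Γ₀ A B hl hpre ih =>
      intro hL
      have hor := hL _ (Finset.mem_insert_self _ _)
      have hL' : L0Seq (insert A (insert B Γ₀)) := by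
        intro C hC
        rcases Finset.mem_insert.mp hC with rfl | hC
        · exact ⟨hor.1.1, hor.2.1⟩
        rcases Finset.mem_insert.mp hC with rfl | hC
        · exact ⟨hor.1.2, hor.2.2⟩
        · exact hL _ (Finset.mem_insert_of_mem hC)
      have hstep := ih hL'
      rw [Finset.image_insert, Finset.image_insert] at hstep
      rw [Finset.image_insert]
      exact OmDerAux.orR _ _ _ _ hstep
  | andR Γ₀ A B hl hp1 hp2 ih1 ih2 =>
      intro hL
      have hand := hL _ (Finset.mem_insert_self _ _)
      have hL1 : L0Seq (insert A Γ₀) := by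
        intro C hC
        rcases Finset.mem_insert.mp hC with rfl | hC
        · exact ⟨hand.1.1, hand.2.1⟩
        · exact hL _ (Finset.mem_insert_of_mem hC)
      have hL2 : L0Seq (insert B Γ₀) := by
        intro C hC
        rcases Finset.mem_insert.mp hC with rfl | hC
        · exact ⟨hand.1.2, hand.2.2⟩
        · exact hL _ (Finset.mem_insert_of_mem hC)
      have h1 := ih1 hL1
      have h2 := ih2 hL2
      rw [Finset.image_insert] at h1 h2
      rw [Finset.image_insert]
      exact OmDerAux.andR _ _ _ _ h1 h2
  | boxR Γ₀ S A hl hpre ih =>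
      intro hL
      have hbox := hL _ (Finset.mem_union_right _ (Finset.mem_insert_self _ _))
      have hL' : L0Seq (insert A Γ₀) := by
        intro C hC
        rcases Finset.mem_insert.mp hC with rfl | hC
        · exact ⟨hbox.1, hbox.2⟩
        · have h := hL _ (Finset.mem_union_left _ (Finset.mem_image_of_mem _ hC))
          exact ⟨h.1, h.2⟩
      have hstep := ih hL'
      rw [Finset.image_insert] at hstep
      rw [Finset.image_union, Finset.image_insert]
      have e : (Γ₀.image Form.dia).image Form.prime = (Γ₀.image Form.prime).image Form.dia := by
        ext x
        simp [Finset.mem_image, Form.prime]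
      rw [e]
      exact OmDerAux.boxR _ _ _ _ hstep
  | clo Γ₀ A hl hpre ih =>
      intro hL
      have hmu := hL _ (Finset.mem_insert_self _ _)
      have hL' : L0Seq (insert (Form.subst A (Form.mu A)) Γ₀) := by
        intro C hC
        rcases Finset.mem_insert.mp hC with rfl | hC
        · exact ⟨Form.isL0_subst hmu.1 hmu.1, Form.closedF_subst (Form.closedF_mu A) _⟩
        · exact hL _ (Finset.mem_insert_of_mem hC)
      have hstep := ih hL'
      rw [Finset.image_insert, Form.prime_subst] at hstep
      rw [Finset.image_insert]
      exact OmDerAux.clo _ _ _ hstep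
  | ind A B hl hpre ih =>
      intro hL
      have hA' : (Form.compl (Form.compl A)).IsL0 := Form.isL0_compl_compl A
      have hB := hL B (Finset.mem_insert_of_mem (Finset.mem_singleton_self B))
      have E1 : Form.compl (Form.mu (Form.compl (Form.compl A))) =
          Form.compl (Form.mu A) := by
        show Form.nu (Form.compl (Form.compl (Form.compl A))) = Form.nu (Form.compl A)
        rw [Form.compl_compl_compl]
      have E2 : Form.compl (Form.subst (Form.compl (Form.compl A)) B) =
          Form.compl (Form.subst A B) := by
        rw [Form.compl_subst, Form.compl_subst, Form.compl_compl_compl]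
      have hlevc : (Form.compl (Form.mu A)).lev ≤ k := hl _ (Finset.mem_insert_self _ _)
      have hlevA' : (Form.mu (Form.compl (Form.compl A))).lev ≤ k := by
        have e : (Form.mu (Form.compl (Form.compl A))).lev =
            (Form.compl (Form.mu A)).lev := by
          rw [← E1, Form.lev_compl]
        rw [e]; exact hlevc
      have hlevD : (Form.subst (Form.compl (Form.compl A)) B).lev ≤ k := by
        have h2 := levOfMDerB hpre _ (Finset.mem_insert_self _ _)
        have e : (Form.subst (Form.compl (Form.compl A)) B).lev =
            (Form.compl (Form.subst A B)).lev := by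
          rw [← E2, Form.lev_compl]
        rw [e]; exact h2
      have hDL0 : (Form.subst (Form.compl (Form.compl A)) B).IsL0 :=
        Form.isL0_subst hA' hB.1
      have hDcl : (Form.subst (Form.compl (Form.compl A)) B).ClosedF :=
        Form.closedF_subst hB.2 _
      have hLp : L0Seq (insert (Form.compl (Form.subst A B)) {B}) := by
        intro C hC
        rcases Finset.mem_insert.mp hC with rfl | hC
        · constructor
          · rw [← E2]; exact Form.isL0_compl hDL0
          · rw [← E2]; exact Form.closedF_compl hDcl
        · rw [Finset.mem_singleton] at hC; subst hC; exact hB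
      have hstep := ih hLp
      rw [Finset.image_insert, Finset.image_singleton] at hstep
      rw [Finset.image_insert, Finset.image_singleton, ← E1]
      cases k with
      | zero =>
          exfalso
          rw [mMu] at hlevA'; omega
      | succ j =>
        refine OmDerAux.omega true _ (Form.compl (Form.compl A))
          ((Form.mu (Form.compl (Form.compl A))).lev) (by rw [mMu]; omega) hlevA' hA'
          (by rw [lev_primeComplMu, mMu]) ?_
        intro Δ hcs hpos hpre2
        rw [show prevOf (j+1) = OmProv j false from rfl, omProv_eq] at hpre2
        have Hind : ∀ X : Sequent, OmDerAux (prevOf (j+1)) (j+1) true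
            (insert (Form.prime (Form.compl (Form.subst (Form.compl (Form.compl A)) B)))
              (insert (Form.prime B) X)) := by
          intro X
          have hstep' : OmDerAux (prevOf (j+1)) (j+1) true
              (insert (Form.prime (Form.compl (Form.subst (Form.compl (Form.compl A)) B)))
                ({Form.prime B} : Finset Form)) := by
            rw [E2]; exact hstep
          refine derW hstep' ?_
          intro x hx
          simp only [Finset.mem_insert, Finset.mem_singleton] at hx ⊢
          tauto
        have heq : insert (Form.prime (Form.mu (Form.compl (Form.compl A)))) Δ =
            Δ ∪ ({Form.var} : Finset Form).image (sT (Form.compl (Form.compl A))) := by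
          rw [Finset.image_singleton, sT_var, Finset.union_comm, ← Finset.insert_eq]
        have hrep := ureplB hA' hlevA' hDL0 hDcl hlevD Hind hpre2 rfl Δ {Form.var} heq
          (by
            intro F hF
            rw [Finset.mem_singleton] at hF
            subst hF
            exact ⟨isL0_var, not_closed_var, Nat.zero_le _⟩)
          (pos_insert_primeMu (by rw [lev_primeComplMu, mMu]) (le_refl _) hpos)
          (closedSeq_insert (closedF_primeMu _) hcs)
        refine derW hrep ?_
        intro x hx
        rcases Finset.mem_union.mp hx with hx | hx
        · exact Finset.mem_union_left _ hx
        · rw [Finset.image_singleton, Finset.mem_singleton] at hx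
          rw [hx]
          exact Finset.mem_union_right _ (Finset.mem_singleton_self _)
  | cut Γ₀ A hIs hCl hl hp1 hp2 ih1 ih2 =>
      intro hL
      have hL1 : L0Seq (insert A Γ₀) := by
        intro C hC
        rcases Finset.mem_insert.mp hC with rfl | hC
        · exact ⟨hIs, hCl⟩
        · exact hL _ hC
      have hL2 : L0Seq (insert (Form.compl A) Γ₀) := by
        intro C hC
        rcases Finset.mem_insert.mp hC with rfl | hC
        · exact ⟨Form.isL0_compl hIs, Form.closedF_compl hCl⟩
        · exact hL _ hC
      have hlevA : A.lev ≤ k := levOfMDerB hp1 _ (Finset.mem_insert_self _ _)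
      have h1 := ih1 hL1
      have h2 := ih2 hL2
      rw [Finset.image_insert] at h1 h2
      exact OmDerAux.cut _ A hIs hCl hlevA h1 h2

/-- Embedding: if an `L0` sequent `Γ` is derivable in `M` by a proof
in which every occurring sequent has level `≤ k`, then `Γ` is derivable in `M^Ω_k`. -/
theorem stmt8 (k : ℕ) (Γ : Sequent) (hΓ : L0Seq Γ)
    (hd : MDerB k Γ) : OmProv k true Γ := by
  have hlev := levOfMDerB hd
  have hmain := mainEmb hd hΓ
  rw [omProv_eq]
  have claim : ∀ (Γ₂ : Finset Form), (∀ C ∈ Γ₂, C.IsL0 ∧ C.ClosedF ∧ C.lev ≤ k) →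
      ∀ (X : Sequent), OmDerAux (prevOf k) k true (X ∪ Γ₂.image Form.prime) →
      OmDerAux (prevOf k) k true (X ∪ Γ₂) := by
    intro Γ₂
    induction Γ₂ using Finset.induction_on with
    | empty =>
        intro _ X h
        rwa [Finset.image_empty] at h
    | @insert a s ha ihs =>
        intro hfacts X hder
        have hfa := hfacts a (Finset.mem_insert_self _ _)
        rw [Finset.image_insert, Finset.union_insert] at hder
        have h1 := deprime hfa.1 hfa.2.1 hfa.2.2 hder
        rw [← Finset.insert_union] at h1
        have h2 := ihs (fun C hC => hfacts C (Finset.mem_insert_of_mem hC)) (insert a X) h1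
        rw [Finset.insert_union] at h2
        rw [Finset.union_insert]
        exact h2
  have hres := claim Γ (fun C hC => ⟨(hΓ C hC).1, (hΓ C hC).2, hlev C hC⟩) ∅
    (by rw [Finset.empty_union]; exact hmain)
  rwa [Finset.empty_union] at hres

end OneVarMu
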